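/- arXiv:2210.03039 — 8 statements merged into one kernel-verified Lean document; each statement's English description precedes it below -/
import Mathlib

section
/- Let ‖·‖₁ denote the l¹-norm on ℂ^r, ‖a‖₁ = Σᵢ|aᵢ|. For every k ≥ 1 and every homogeneous polynomial P = Σ_{|α|=k} a_α X^α ∈ ℂ[X₁,…,X_r] of degree k, the projective symmetric norm of P with respect to ‖·‖₁ equals the sum of the absolute values of its coefficients: inf{ Σ_j ∏_{i=1}^k ‖a_{j,i}‖₁ : P = Σ_j l_{j,1}⋯l_{j,k} is a finite sum of products of k linear forms l_{j,i} with coefficient vectors a_{j,i} ∈ ℂ^r } = Σ_{|α|=k} |a_α|. -/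
open scoped BigOperators

/-- The projective symmetric norm of a degree-`k` homogeneous polynomial with respect to a
norm `N` on `ℂ^r`: infimum of `Σ_j ∏_i N(a_{j,i})` over decompositions
`P = Σ_j l_{j,1} ⋯ l_{j,k}` into finite sums of products of `k` linear forms `l_{j,i}`
with coefficient vectors `a_{j,i} ∈ ℂ^r`. -/
noncomputable def projNorm (r k : ℕ) (N : (Fin r → ℂ) → ℝ) (P : MvPolynomial (Fin r) ℂ) : ℝ :=
  sInf {c : ℝ | ∃ (n : ℕ) (a : Fin n → Fin k → Fin r → ℂ),
    P = ∑ j, ∏ i, (∑ m, MvPolynomial.C (a j i m) * MvPolynomial.X m) ∧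
    c = ∑ j, ∏ i, N (a j i)}

/-! The coefficient `l¹` norm of polynomials is subadditive and submultiplicative, and on a linear
form it is at most the `l¹` norm of the coefficient vector; hence every decomposition of `P`
costs at least `Σ_α |a_α|`. Conversely, for `k ≥ 1` a term `a_α X^α` is the product of the `k`
linear forms `a_α X_{i₁}, X_{i₂}, …, X_{i_k}`, of total cost `|a_α|`, and summing these over the
support of `P` gives a decomposition of cost exactly `Σ_α |a_α|`. -/

open MvPolynomial

theorem Multiset.exists_fin_prod_map_eq {ι M : Type*} [CommMonoid M] {s : Multiset ι} {k : ℕ}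
    (hs : Multiset.card s = k) (g : ι → M) : ∃ f : Fin k → ι, (s.map g).prod = ∏ i, g (f i) := by
  have hlen : s.toList.length = k := (Multiset.length_toList s).trans hs
  refine ⟨fun i => s.toList[i.cast hlen.symm], ?_⟩
  rw [← Multiset.prod_map_toList, ← Fin.prod_univ_fun_getElem]
  exact Fintype.prod_equiv (finCongr hlen) _ _ fun i => rfl

theorem MvPolynomial.prod_X_toMultiset {σ R : Type*} [CommSemiring R] (α : σ →₀ ℕ) :
    (α.toMultiset.map (X : σ → MvPolynomial σ R)).prod = monomial α 1 := by
  rw [Finsupp.toMultiset_map, Finsupp.prod_toMultiset,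
    Finsupp.prod_mapDomain_index (fun _ => pow_zero _) (fun _ _ _ => pow_add _ _ _),
    monomial_eq, C_1, one_mul]

theorem MvPolynomial.exists_prod_X_eq_monomial {σ R : Type*} [CommSemiring R] {k : ℕ}
    {α : σ →₀ ℕ} (hα : α.degree = k) :
    ∃ f : Fin k → σ, ∏ i, (X (f i) : MvPolynomial σ R) = monomial α 1 := by
  have hcard : Multiset.card α.toMultiset = k := by
    rw [Finsupp.card_toMultiset, ← hα, Finsupp.degree]; rfl
  obtain ⟨f, hf⟩ := Multiset.exists_fin_prod_map_eq hcard (X : σ → MvPolynomial σ R)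
  exact ⟨f, hf ▸ prod_X_toMultiset α⟩

section CoeffL1

variable {σ R : Type*} [SeminormedCommRing R]

noncomputable def coeffL1 (P : MvPolynomial σ R) : ℝ :=
  ∑ α ∈ P.support, ‖P.coeff α‖

lemma coeffL1_nonneg (P : MvPolynomial σ R) : 0 ≤ coeffL1 P :=
  Finset.sum_nonneg fun _ _ => norm_nonneg _

lemma coeffL1_eq_sum_of_support_subset (P : MvPolynomial σ R) {S : Finset (σ →₀ ℕ)}
    (hS : P.support ⊆ S) : coeffL1 P = ∑ α ∈ S, ‖P.coeff α‖ :=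
  Finset.sum_subset hS fun α _ hα => by rw [notMem_support_iff.mp hα, norm_zero]

lemma coeffL1_add_le (P Q : MvPolynomial σ R) : coeffL1 (P + Q) ≤ coeffL1 P + coeffL1 Q := by
  classical
  rw [coeffL1_eq_sum_of_support_subset (P + Q) support_add,
    coeffL1_eq_sum_of_support_subset P Finset.subset_union_left,
    coeffL1_eq_sum_of_support_subset Q Finset.subset_union_right, ← Finset.sum_add_distrib]
  exact Finset.sum_le_sum fun α _ => (coeff_add α P Q).symm ▸ norm_add_le _ _

lemma coeffL1_sum_le {ι : Type*} (s : Finset ι) (f : ι → MvPolynomial σ R) :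
    coeffL1 (∑ i ∈ s, f i) ≤ ∑ i ∈ s, coeffL1 (f i) := by
  induction s using Finset.cons_induction with
  | empty => simp [coeffL1]
  | cons i s _ ih =>
    rw [Finset.sum_cons, Finset.sum_cons]
    exact (coeffL1_add_le _ _).trans (add_le_add_right ih _)

lemma coeffL1_monomial_le (α : σ →₀ ℕ) (c : R) : coeffL1 (monomial α c) ≤ ‖c‖ := by
  classical
  rw [coeffL1_eq_sum_of_support_subset _ (support_monomial_subset (s := α) (a := c)),
    Finset.sum_singleton, coeff_monomial, if_pos rfl]

lemma coeffL1_mul_le (P Q : MvPolynomial σ R) : coeffL1 (P * Q) ≤ coeffL1 P * coeffL1 Q := by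
  conv_lhs => rw [P.as_sum, Q.as_sum, Finset.sum_mul_sum]
  refine (coeffL1_sum_le _ _).trans ?_
  rw [coeffL1, coeffL1, Finset.sum_mul]
  refine Finset.sum_le_sum fun β _ => (coeffL1_sum_le _ _).trans ?_
  rw [Finset.mul_sum]
  refine Finset.sum_le_sum fun γ _ => ?_
  rw [monomial_mul]
  exact (coeffL1_monomial_le _ _).trans (norm_mul_le _ _)

lemma coeffL1_prod_le [NormOneClass R] {ι : Type*} (s : Finset ι) (f : ι → MvPolynomial σ R) :
    coeffL1 (∏ i ∈ s, f i) ≤ ∏ i ∈ s, coeffL1 (f i) := by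
  induction s using Finset.cons_induction with
  | empty => simpa using coeffL1_monomial_le (0 : σ →₀ ℕ) (1 : R)
  | cons i s _ ih =>
    rw [Finset.prod_cons, Finset.prod_cons]
    exact (coeffL1_mul_le _ _).trans
      (mul_le_mul_of_nonneg_left ih (coeffL1_nonneg _))

end CoeffL1

section LinearForm

variable {σ R : Type*} [Fintype σ]

noncomputable def linearForm [CommSemiring R] (a : σ → R) : MvPolynomial σ R :=
  ∑ m, C (a m) * X m

lemma linearForm_single [CommSemiring R] [DecidableEq σ] (m : σ) (c : R) :
    linearForm (Pi.single m c) = C c * X m := by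
  simp [linearForm, Pi.single_apply, apply_ite C, ite_mul]

lemma coeffL1_linearForm_le [SeminormedCommRing R] (a : σ → R) :
    coeffL1 (linearForm a) ≤ ∑ m, ‖a m‖ :=
  (coeffL1_sum_le _ _).trans <| Finset.sum_le_sum fun m _ =>
    C_mul_X_eq_monomial (s := m) (a := a m) ▸ coeffL1_monomial_le _ _

end LinearForm

section Decomposition

variable {r k : ℕ} {N : (Fin r → ℂ) → ℝ}

def IsDecompositionCost (r k : ℕ) (N : (Fin r → ℂ) → ℝ) (P : MvPolynomial (Fin r) ℂ)
    (c : ℝ) : Prop :=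
  ∃ (n : ℕ) (a : Fin n → Fin k → Fin r → ℂ),
    P = ∑ j, ∏ i, linearForm (a j i) ∧ c = ∑ j, ∏ i, N (a j i)

lemma projNorm_eq_sInf (P : MvPolynomial (Fin r) ℂ) :
    projNorm r k N P = sInf {c | IsDecompositionCost r k N P c} := rfl

lemma isDecompositionCost_zero : IsDecompositionCost r k N 0 0 :=
  ⟨0, Fin.elim0, by simp, by simp⟩

lemma IsDecompositionCost.add {P Q : MvPolynomial (Fin r) ℂ} {c d : ℝ}
    (hP : IsDecompositionCost r k N P c) (hQ : IsDecompositionCost r k N Q d) :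
    IsDecompositionCost r k N (P + Q) (c + d) := by
  obtain ⟨n, a, rfl, rfl⟩ := hP
  obtain ⟨m, b, rfl, rfl⟩ := hQ
  exact ⟨n + m, Fin.append a b, by simp [Fin.sum_univ_add], by simp [Fin.sum_univ_add]⟩

lemma isDecompositionCost_sum {ι : Type*} (s : Finset ι) {P : ι → MvPolynomial (Fin r) ℂ}
    {c : ι → ℝ} (h : ∀ i ∈ s, IsDecompositionCost r k N (P i) (c i)) :
    IsDecompositionCost r k N (∑ i ∈ s, P i) (∑ i ∈ s, c i) := by
  induction s using Finset.cons_induction with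
  | empty => exact isDecompositionCost_zero
  | cons i s _ ih =>
    rw [Finset.sum_cons, Finset.sum_cons]
    exact (h i (Finset.mem_cons_self i s)).add
      (ih fun j hj => h j (Finset.mem_cons_of_mem hj))

lemma isDecompositionCost_l1_monomial (hk : 1 ≤ k) {α : Fin r →₀ ℕ} (hα : α.degree = k)
    (c : ℂ) : IsDecompositionCost r k (fun a => ∑ m, ‖a m‖) (monomial α c) ‖c‖ := by
  obtain ⟨f, hf⟩ := exists_prod_X_eq_monomial (R := ℂ) hα
  set w : Fin k → ℂ := Pi.mulSingle ⟨0, hk⟩ c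
  have hw : ∏ i, w i = c := Fintype.prod_pi_mulSingle' _ _
  refine ⟨1, fun _ i => Pi.single (f i) (w i), ?_, ?_⟩
  · simp only [linearForm_single, Finset.prod_mul_distrib, ← map_prod, hw, hf, Finset.univ_unique,
      Finset.sum_singleton, C_mul_monomial, mul_one]
  · simp [Pi.single_apply, apply_ite, ← norm_prod, hw]

lemma IsDecompositionCost.coeffL1_le {P : MvPolynomial (Fin r) ℂ} {c : ℝ}
    (h : IsDecompositionCost r k (fun a => ∑ m, ‖a m‖) P c) : coeffL1 P ≤ c := by
  obtain ⟨n, a, rfl, rfl⟩ := h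
  refine (coeffL1_sum_le _ _).trans (Finset.sum_le_sum fun j _ => ?_)
  exact (coeffL1_prod_le _ _).trans (Finset.prod_le_prod (fun i _ => coeffL1_nonneg _)
    fun i _ => coeffL1_linearForm_le _)

lemma isDecompositionCost_l1_coeffL1 (hk : 1 ≤ k) {P : MvPolynomial (Fin r) ℂ}
    (hP : P.IsHomogeneous k) : IsDecompositionCost r k (fun a => ∑ m, ‖a m‖) P (coeffL1 P) := by
  have hdeg : ∀ α ∈ P.support, α.degree = k := fun α hα => by
    by_contra h
    exact mem_support_iff.mp hα (hP.coeff_eq_zero h)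
  have h := isDecompositionCost_sum P.support fun α hα =>
    isDecompositionCost_l1_monomial hk (hdeg α hα) (P.coeff α)
  rwa [← P.as_sum] at h

end Decomposition

/-- For the `l¹`-norm on `ℂ^r`, the projective symmetric norm of a homogeneous polynomial
of degree `k` equals the sum of the absolute values of its coefficients. -/
theorem projNorm_l1_eq_sum_abs_coeff (r k : ℕ) (hk : 1 ≤ k)
    (P : MvPolynomial (Fin r) ℂ) (hP : P.IsHomogeneous k) :
    projNorm r k (fun a => ∑ m, ‖a m‖) P =
      ∑ α ∈ P.support, ‖P.coeff α‖ := by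
  rw [projNorm_eq_sInf]
  exact IsLeast.csInf_eq ⟨isDecompositionCost_l1_coeffL1 hk hP, fun c hc => hc.coeffL1_le⟩
end

section
/- Let (V, ‖·‖_V) be a finite-dimensional complex normed vector space and let ε > 0. Then there exist l ∈ ℕ and a surjective ℂ-linear map π : ℂ^l → V such that, denoting by [l₁](v) := inf{‖u‖₁ : u ∈ ℂ^l, π(u) = v} the quotient norm on V induced by the l¹-norm ‖u‖₁ = Σᵢ|uᵢ| on ℂ^l, one has e^{−ε}·[l₁](v) ≤ ‖v‖_V ≤ [l₁](v) for all v ∈ V. -/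
/-!
Take a finite `δ`-net `x` of the unit sphere of `V`, with `δ < 1`, and let `π = ∑ uᵢ xᵢ`. Since
`‖xᵢ‖ = 1`, the quotient norm dominates `‖·‖_V`. Conversely, writing `v = ‖v‖ xᵢ + r` with
`‖r‖ < δ ‖v‖` shows that an `l¹`-cost bound `C ‖v‖` for all `v` improves to `(1 + δ C) ‖v‖`.
Starting from some bound `K` (the net spans `V` by Riesz's lemma, and a surjection onto a
finite-dimensional space has a bounded linear section), the iterates are
`(1 - δ)⁻¹ + δ ^ k K`, which eventually drop below `e^ε` once `(1 - δ)⁻¹ < e^ε`.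
-/

open Metric Filter

section NormedField

variable (𝕜 : Type*) {V ι : Type*} [NormedField 𝕜] [SeminormedAddCommGroup V] [NormedSpace 𝕜 V]
  [Fintype ι]

def L1Spans (x : ι → V) (C : ℝ) : Prop :=
  ∀ v, ∃ u : ι → 𝕜, Fintype.linearCombination 𝕜 x u = v ∧ ∑ i, ‖u i‖ ≤ C * ‖v‖

/-- The quotient norm `[l₁]` induced by `π = Fintype.linearCombination 𝕜 x`. -/
noncomputable def l1QuotientNorm (x : ι → V) (v : V) : ℝ :=
  sInf {c : ℝ | ∃ u : ι → 𝕜, Fintype.linearCombination 𝕜 x u = v ∧ c = ∑ i, ‖u i‖}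

variable {𝕜} {x : ι → V} {C C' : ℝ}

theorem L1Spans.mono (h : L1Spans 𝕜 x C) (hCC' : C ≤ C') : L1Spans 𝕜 x C' := by
  intro v
  obtain ⟨u, hu, hcost⟩ := h v
  exact ⟨u, hu, hcost.trans (by gcongr)⟩

theorem L1Spans.surjective (h : L1Spans 𝕜 x C) :
    Function.Surjective (Fintype.linearCombination 𝕜 x) := fun v ↦
  (h v).imp fun _ ↦ And.left

theorem L1Spans.l1QuotientNorm_le (h : L1Spans 𝕜 x C) (v : V) :
    l1QuotientNorm 𝕜 x v ≤ C * ‖v‖ := by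
  obtain ⟨u, hu, hcost⟩ := h v
  have hbdd : BddBelow {c : ℝ | ∃ u : ι → 𝕜, Fintype.linearCombination 𝕜 x u = v ∧
      c = ∑ i, ‖u i‖} := ⟨0, by rintro _ ⟨u', -, rfl⟩; positivity⟩
  exact (csInf_le hbdd ⟨u, hu, rfl⟩).trans hcost

theorem norm_le_l1QuotientNorm (hx : ∀ i, ‖x i‖ ≤ 1) {v : V}
    (hv : ∃ u, Fintype.linearCombination 𝕜 x u = v) : ‖v‖ ≤ l1QuotientNorm 𝕜 x v := by
  obtain ⟨u, hu⟩ := hv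
  refine le_csInf ⟨_, u, hu, rfl⟩ ?_
  rintro _ ⟨u, rfl, rfl⟩
  rw [Fintype.linearCombination_apply]
  refine (norm_sum_le _ _).trans (Finset.sum_le_sum fun i _ ↦ ?_)
  rw [norm_smul]
  exact mul_le_of_le_one_right (norm_nonneg _) (hx i)

end NormedField

theorem exists_fin_net_sphere {E : Type*} [SeminormedAddCommGroup E] [ProperSpace E] {δ : ℝ}
    (hδ : 0 < δ) :
    ∃ (l : ℕ) (x : Fin l → E), (∀ i, ‖x i‖ = 1) ∧ ∀ w : E, ‖w‖ = 1 → ∃ i, ‖w - x i‖ < δ := by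
  obtain ⟨t, hts, htf, hcover⟩ :=
    finite_approx_of_totallyBounded (isCompact_sphere (0 : E) 1).totallyBounded δ hδ
  have : Finite t := htf
  let e := Finite.equivFin t
  refine ⟨Nat.card t, fun i ↦ e.symm i, fun i ↦ by simpa using hts (e.symm i).2, fun w hw ↦ ?_⟩
  obtain ⟨y, hyt, hwy⟩ := Set.mem_iUnion₂.1 (hcover (mem_sphere_zero_iff_norm.2 hw))
  refine ⟨e ⟨y, hyt⟩, ?_⟩
  show ‖w - (e.symm (e ⟨y, hyt⟩) : E)‖ < δ
  rw [Equiv.symm_apply_apply]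
  simpa [dist_eq_norm] using hwy

section RCLike

variable {𝕜 V ι : Type*} [RCLike 𝕜] [NormedAddCommGroup V] [NormedSpace 𝕜 V] {x : ι → V} {δ : ℝ}

theorem exists_norm_sub_smul_lt (hnet : ∀ w : V, ‖w‖ = 1 → ∃ i, ‖w - x i‖ < δ) {v : V}
    (hv : v ≠ 0) : ∃ i, ‖v - (‖v‖ : 𝕜) • x i‖ < δ * ‖v‖ := by
  have hv' : (‖v‖ : 𝕜) ≠ 0 := by simpa using hv
  obtain ⟨i, hi⟩ := hnet ((‖v‖ : 𝕜)⁻¹ • v) (by simp [norm_smul, hv])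
  refine ⟨i, ?_⟩
  have : v - (‖v‖ : 𝕜) • x i = (‖v‖ : 𝕜) • ((‖v‖ : 𝕜)⁻¹ • v - x i) := by
    rw [smul_sub, smul_inv_smul₀ hv']
  rw [this, norm_smul, RCLike.norm_ofReal, abs_norm, mul_comm δ]
  exact mul_lt_mul_of_pos_left hi (norm_pos_iff.2 hv)

theorem Submodule.eq_top_of_forall_exists_norm_sub_lt {F : Submodule 𝕜 V}
    (hF : IsClosed (F : Set V)) (hδ : δ < 1)
    (hnet : ∀ w : V, ‖w‖ = 1 → ∃ i, ‖w - x i‖ < δ) (hx : ∀ i, x i ∈ F) : F = ⊤ := by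
  by_contra hne
  obtain ⟨v, hvF, hv⟩ := riesz_lemma hF (SetLike.exists_not_mem_of_ne_top F hne) hδ
  have hv0 : v ≠ 0 := fun h ↦ hvF (h ▸ F.zero_mem)
  obtain ⟨i, hi⟩ := exists_norm_sub_smul_lt (𝕜 := 𝕜) hnet hv0
  exact (hv _ (F.smul_mem _ (hx i))).not_gt hi

variable [Fintype ι]

theorem exists_l1Spans_of_surjective [FiniteDimensional 𝕜 V]
    (hx : Function.Surjective (Fintype.linearCombination 𝕜 x)) :
    ∃ K, 0 ≤ K ∧ L1Spans 𝕜 x K := by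
  obtain ⟨g, hg⟩ := (Fintype.linearCombination 𝕜 x).exists_rightInverse_of_surjective
    (LinearMap.range_eq_top.2 hx)
  let G : V →L[𝕜] ι → 𝕜 := ⟨g, g.continuous_of_finiteDimensional⟩
  refine ⟨Fintype.card ι * ‖G‖, by positivity, fun v ↦ ⟨g v, congr($hg v), ?_⟩⟩
  calc ∑ i, ‖g v i‖ ≤ Finset.univ.card • ‖G v‖ :=
        Finset.sum_le_card_nsmul _ _ _ fun i _ ↦ norm_le_pi_norm (G v) i
    _ = Fintype.card ι * ‖G v‖ := by rw [Finset.card_univ, nsmul_eq_mul]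
    _ ≤ Fintype.card ι * (‖G‖ * ‖v‖) := by gcongr; exact G.le_opNorm v
    _ = _ := by ring

theorem L1Spans.one_add_mul (h : L1Spans 𝕜 x C) (hC : 0 ≤ C)
    (hnet : ∀ w : V, ‖w‖ = 1 → ∃ i, ‖w - x i‖ < δ) : L1Spans 𝕜 x (1 + δ * C) := by
  classical
  intro v
  rcases eq_or_ne v 0 with rfl | hv
  · exact ⟨0, map_zero _, by simp⟩
  obtain ⟨i, hi⟩ := exists_norm_sub_smul_lt (𝕜 := 𝕜) hnet hv
  obtain ⟨u, hu, hcost⟩ := h (v - (‖v‖ : 𝕜) • x i)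
  refine ⟨u + Pi.single i (‖v‖ : 𝕜), ?_, ?_⟩
  · simp [hu]
  calc ∑ j, ‖(u + Pi.single i (‖v‖ : 𝕜) : ι → 𝕜) j‖
      ≤ ∑ j, ‖u j‖ + ∑ j, ‖Pi.single (M := fun _ ↦ 𝕜) i (‖v‖ : 𝕜) j‖ := by
        rw [← Finset.sum_add_distrib]
        exact Finset.sum_le_sum fun j _ ↦ norm_add_le _ _
    _ ≤ C * (δ * ‖v‖) + ‖v‖ := by
        gcongr
        · exact hcost.trans (by gcongr)
        · rw [Finset.sum_eq_single i (fun j _ hj ↦ by simp [hj]) (by simp)]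
          simp
    _ = (1 + δ * C) * ‖v‖ := by ring

theorem L1Spans.of_net [FiniteDimensional 𝕜 V] (hδ0 : 0 ≤ δ) (hδ1 : δ < 1)
    (hnet : ∀ w : V, ‖w‖ = 1 → ∃ i, ‖w - x i‖ < δ) {C : ℝ} (hC : (1 - δ)⁻¹ < C) :
    L1Spans 𝕜 x C := by
  have hspan : Submodule.span 𝕜 (Set.range x) = ⊤ :=
    Submodule.eq_top_of_forall_exists_norm_sub_lt (Submodule.closed_of_finiteDimensional _)
      hδ1 hnet fun i ↦ Submodule.subset_span ⟨i, rfl⟩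
  obtain ⟨K, hK, hxK⟩ := exists_l1Spans_of_surjective (x := x)
    (LinearMap.range_eq_top.1 ((Fintype.range_linearCombination 𝕜 x).trans hspan))
  have hpos : 0 < 1 - δ := by linarith
  have hiter : ∀ k : ℕ, L1Spans 𝕜 x ((1 - δ)⁻¹ + δ ^ k * K) := by
    intro k
    induction k with
    | zero => exact hxK.mono (by simpa using (inv_pos.2 hpos).le)
    | succ k ih =>
      convert ih.one_add_mul (by positivity) hnet using 1
      field_simp
      ring
  obtain ⟨k, hk⟩ := (((tendsto_pow_atTop_nhds_zero_of_lt_one hδ0 hδ1).mul_const K).eventually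
    (gt_mem_nhds (a := C - (1 - δ)⁻¹) (by simpa using hC))).exists
  exact (hiter k).mono (by linarith)

end RCLike

/-- Every norm on a finite-dimensional complex vector space is, up to a multiplicative
factor `e^{ε}`, a quotient of the `l¹`-norm on some `ℂ^l`: there exist `l ∈ ℕ` and a
surjective linear map `π : ℂ^l → V` such that the quotient norm
`[l₁](v) = inf{‖u‖₁ : π(u) = v}` satisfies `e^{-ε}·[l₁](v) ≤ ‖v‖_V ≤ [l₁](v)`. -/
theorem exists_l1_quotient_approximation
    (V : Type*) [NormedAddCommGroup V] [NormedSpace ℂ V] [FiniteDimensional ℂ V]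
    (ε : ℝ) (hε : 0 < ε) :
    ∃ (l : ℕ) (π : (Fin l → ℂ) →ₗ[ℂ] V), Function.Surjective π ∧
      ∀ v : V,
        Real.exp (-ε) *
            sInf {c : ℝ | ∃ u : Fin l → ℂ, π u = v ∧ c = ∑ i, ‖u i‖} ≤ ‖v‖ ∧
        ‖v‖ ≤ sInf {c : ℝ | ∃ u : Fin l → ℂ, π u = v ∧ c = ∑ i, ‖u i‖} := by
  have hexp : Real.exp (-ε) < 1 := Real.exp_lt_one_iff.2 (by linarith)
  set δ := (1 - Real.exp (-ε)) / 2
  have hδ0 : 0 < δ := by simp only [δ]; linarith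
  have hδ1 : δ < 1 := by simp only [δ]; linarith [Real.exp_pos (-ε)]
  have hδε : (1 - δ)⁻¹ < Real.exp ε := by
    rw [inv_lt_comm₀ (by linarith) (Real.exp_pos ε), ← Real.exp_neg]
    simp only [δ]
    linarith
  have : ProperSpace V := FiniteDimensional.proper_rclike ℂ V
  obtain ⟨l, x, hx, hnet⟩ := exists_fin_net_sphere (E := V) hδ0
  have hxC : L1Spans ℂ x (Real.exp ε) := .of_net hδ0.le hδ1 hnet hδε
  refine ⟨l, Fintype.linearCombination ℂ x, hxC.surjective, fun v ↦ ⟨?_, ?_⟩⟩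
  · calc Real.exp (-ε) * l1QuotientNorm ℂ x v ≤ Real.exp (-ε) * (Real.exp ε * ‖v‖) := by
          gcongr; exact hxC.l1QuotientNorm_le v
      _ = ‖v‖ := by rw [← mul_assoc, ← Real.exp_add]; simp
  · exact norm_le_l1QuotientNorm (fun i ↦ (hx i).le) (hxC.surjective v)
end

section
/- Let V be a finite-dimensional complex vector space and let H₁, H₂, H₃ be Hermitian norms on V (each induced by a Hermitian inner product) ordered pointwise as H₁ ≤ H₂ ≤ H₃. Then d₁(H₁,H₂) + d₁(H₂,H₃) = d₁(H₁,H₃). -/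
open scoped BigOperators

/-- A Hermitian norm: a norm induced by a positive definite Hermitian inner product. -/
def IsHermitianNorm {V : Type*} [AddCommGroup V] [Module ℂ V] (N : V → ℝ) : Prop :=
  ∃ p : V → V → ℂ,
    (∀ u v w, p (u + v) w = p u w + p v w) ∧
    (∀ (c : ℂ) (u v : V), p (c • u) v = c * p u v) ∧
    (∀ u v, p v u = (starRingEnd ℂ) (p u v)) ∧
    (∀ v, v ≠ 0 → 0 < (p v v).re) ∧
    (∀ v, N v = Real.sqrt (p v v).re)

/-- The `j`-th element of the logarithmic relative spectrum of `N₁` with respect to `N₂`: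
`λ_j(N₁,N₂) = sup_{W ⊆ V, dim W = j} inf_{w ∈ W∖{0}} log (N₂(w)/N₁(w))`. -/
noncomputable def relSpec {V : Type*} [AddCommGroup V] [Module ℂ V]
    (N₁ N₂ : V → ℝ) (j : ℕ) : ℝ :=
  sSup {x : ℝ | ∃ W : Submodule ℂ V, Module.finrank ℂ W = j ∧
    x = sInf {y : ℝ | ∃ w : V, w ∈ W ∧ w ≠ 0 ∧ y = Real.log (N₂ w / N₁ w)}}

/-- `d₁(N₁,N₂) = (Σ_{j=1}^{r} |λ_j(N₁,N₂)|)/r` where `r = dim V`. -/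
noncomputable def dOne {V : Type*} [AddCommGroup V] [Module ℂ V] (N₁ N₂ : V → ℝ) : ℝ :=
  (∑ j ∈ Finset.Icc 1 (Module.finrank ℂ V), |relSpec N₁ N₂ j|) / (Module.finrank ℂ V)

open scoped ComplexConjugate

section Aux
variable {V : Type*} [AddCommGroup V] [Module ℂ V]

/-- Bundled axioms for a positive definite Hermitian sesquilinear form. -/
structure GoodForm (p : V → V → ℂ) : Prop where
  add_left : ∀ u v w, p (u + v) w = p u w + p v w
  smul_left : ∀ (c : ℂ) (u v : V), p (c • u) v = c * p u v
  conj_symm : ∀ u v, p v u = (starRingEnd ℂ) (p u v)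
  pos : ∀ v, v ≠ 0 → 0 < (p v v).re

namespace GoodForm
variable {p : V → V → ℂ}

lemma add_right (hp : GoodForm p) (u v w : V) : p u (v + w) = p u v + p u w := by
  rw [hp.conj_symm, hp.add_left, map_add, ← hp.conj_symm, ← hp.conj_symm]

lemma smul_right (hp : GoodForm p) (c : ℂ) (u v : V) : p u (c • v) = conj c * p u v := by
  rw [hp.conj_symm, hp.smul_left, map_mul, ← hp.conj_symm]

lemma zero_left (hp : GoodForm p) (v : V) : p 0 v = 0 := by
  have := hp.add_left 0 0 v; simpa using this

lemma nonneg_re (hp : GoodForm p) (v : V) : 0 ≤ (p v v).re := by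
  by_cases h : v = 0
  · simp [h, hp.zero_left]
  · exact (hp.pos v h).le

/-- The associated `InnerProductSpace.Core`, with `⟪x, y⟫ = p y x`. -/
noncomputable def core (hp : GoodForm p) : InnerProductSpace.Core ℂ V where
  inner x y := p y x
  conj_inner_symm x y := by rw [← hp.conj_symm]
  re_inner_nonneg x := hp.nonneg_re x
  add_left x y z := hp.add_right z x y
  smul_left x y r := hp.smul_right r y x
  definite x hx := by
    by_contra h
    have h2 := hp.pos x h
    have : p x x = 0 := hx
    rw [this] at h2; simp at h2

/-- Expansion of a form on linear combinations. -/
lemma apply_sum (hp : GoodForm p) {r : ℕ} (e : Fin r → V) (c : Fin r → ℂ) :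
    p (∑ i, c i • e i) (∑ i, c i • e i)
      = ∑ i, ∑ j, (c i * conj (c j)) * p (e i) (e j) := by
  have h1 : ∀ w : V, p (∑ i, c i • e i) w = ∑ i, c i * p (e i) w := by
    intro w
    let l : V →ₗ[ℂ] ℂ :=
      { toFun := fun x => p x w
        map_add' := fun a b => hp.add_left a b w
        map_smul' := fun m a => hp.smul_left m a w }
    have hl : ∀ x, p x w = l x := fun _ => rfl
    rw [hl, map_sum]
    refine Finset.sum_congr rfl fun i _ => ?_
    rw [map_smul]; simp [l]
  have h2 : ∀ u : V, p u (∑ j, c j • e j) = ∑ j, conj (c j) * p u (e j) := by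
    intro u
    rw [hp.conj_symm, h1, map_sum]
    refine Finset.sum_congr rfl fun j _ => ?_
    rw [map_mul, ← hp.conj_symm]
  rw [h1]
  refine Finset.sum_congr rfl fun i _ => ?_
  rw [h2, Finset.mul_sum]
  refine Finset.sum_congr rfl fun j _ => ?_
  ring

end GoodForm

/-- Existence of the transfer operator `T` with `q v u = p v (T u)`. -/
lemma exists_transfer [FiniteDimensional ℂ V] {p q : V → V → ℂ}
    (hp : GoodForm p) (hq : GoodForm q) :
    ∃ T : V →ₗ[ℂ] V, ∀ u v : V, q v u = p v (T u) := by
  letI : NormedAddCommGroup V := hp.core.toNormedAddCommGroup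
  letI : InnerProductSpace ℂ V := InnerProductSpace.ofCore hp.core.toCore
  have hinner : ∀ x y : V, (inner ℂ x y : ℂ) = p y x := fun x y => rfl
  set χ : V → StrongDual ℂ V := fun u =>
    LinearMap.toContinuousLinearMap
      { toFun := fun v => q v u
        map_add' := fun v w => hq.add_left v w u
        map_smul' := fun c v => hq.smul_left c v u } with hχ
  have hχ_apply : ∀ u v, χ u v = q v u := fun u v => rfl
  set t : V → V := fun u => (InnerProductSpace.toDual ℂ V).symm (χ u) with ht
  have key : ∀ u v : V, p v (t u) = q v u := by
    intro u v
    have := InnerProductSpace.toDual_symm_apply (𝕜 := ℂ) (E := V) (x := v) (y := χ u)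
    rw [← hinner, ht]; simp only
    rw [this, hχ_apply]
  refine ⟨{ toFun := t, map_add' := ?_, map_smul' := ?_ }, fun u v => (key u v).symm⟩
  · intro u u'
    have : χ (u + u') = χ u + χ u' := by
      ext v
      simp only [ContinuousLinearMap.add_apply, hχ_apply]
      exact hq.add_right v u u'
    simp only [ht, this, map_add]
  · intro c u
    have : χ (c • u) = conj c • χ u := by
      ext v
      simp only [ContinuousLinearMap.smul_apply, hχ_apply, smul_eq_mul]
      exact hq.smul_right c v u
    simp only [ht, this, RingHom.id_apply]
    rw [LinearIsometryEquiv.map_smulₛₗ]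
    simp

/-- Main per-pair lemma: the sum of the absolute logarithmic relative spectrum equals half
the log of the (real, positive) determinant of the transfer operator. -/
lemma pair_lemma [FiniteDimensional ℂ V] {p q : V → V → ℂ}
    (hp : GoodForm p) (hq : GoodForm q)
    (hle : ∀ v, (p v v).re ≤ (q v v).re)
    {N₁ N₂ : V → ℝ} (hN₁ : ∀ v, N₁ v = Real.sqrt (p v v).re)
    (hN₂ : ∀ v, N₂ v = Real.sqrt (q v v).re)
    {T : V →ₗ[ℂ] V} (hT : ∀ u v : V, q v u = p v (T u)) :
    0 < (LinearMap.det T).re ∧ (LinearMap.det T).im = 0 ∧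
    ∑ j ∈ Finset.Icc 1 (Module.finrank ℂ V), |relSpec N₁ N₂ j|
      = Real.log (LinearMap.det T).re / 2 := by
  classical
  set r := Module.finrank ℂ V with hr
  letI : NormedAddCommGroup V := hp.core.toNormedAddCommGroup
  letI : InnerProductSpace ℂ V := InnerProductSpace.ofCore hp.core.toCore
  have hinner : ∀ x y : V, (inner ℂ x y : ℂ) = p y x := fun x y => rfl
  have hTs : T.IsSymmetric := by
    intro x y
    rw [hinner, hinner, ← hT x y, hp.conj_symm x (T y), ← hT y x, ← hq.conj_symm]
  have hrr : Module.finrank ℂ V = r := hr.symm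
  set f := hTs.eigenvectorBasis hrr with hf
  set ν := hTs.eigenvalues hrr with hν
  have happly : ∀ i, T (f i) = (ν i : ℂ) • f i := fun i => hTs.apply_eigenvectorBasis hrr i
  have hortho : ∀ i j, p (f j) (f i) = if i = j then 1 else 0 := by
    intro i j
    rw [← hinner]
    exact orthonormal_iff_ite.mp f.orthonormal i j
  have hp_diag : ∀ i, (p (f i) (f i)) = 1 := fun i => by simpa using hortho i i
  have hq_diag : ∀ i, q (f i) (f i) = (ν i : ℂ) := by
    intro i
    rw [hT, happly, hp.smul_right]
    simp [hp_diag i]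
  have hν1 : ∀ i, 1 ≤ ν i := by
    intro i
    have h2 := hle (f i)
    rw [hq_diag i, hp_diag i] at h2
    simpa using h2
  have hdet : LinearMap.det T = ((∏ i, ν i : ℝ) : ℂ) := by
    have hM : LinearMap.toMatrix f.toBasis f.toBasis T
        = Matrix.diagonal (fun i => (ν i : ℂ)) := by
      ext i j
      rw [LinearMap.toMatrix_apply, OrthonormalBasis.coe_toBasis, happly, map_smul,
        ← OrthonormalBasis.coe_toBasis, Module.Basis.repr_self]
      simp only [Finsupp.smul_single, smul_eq_mul, mul_one, Finsupp.single_apply,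
        Matrix.diagonal_apply]
      by_cases h : i = j
      · simp [h]
      · simp [h, Ne.symm h]
    rw [← LinearMap.det_toMatrix f.toBasis, hM, Matrix.det_diagonal]
    exact (Complex.ofReal_prod _ _).symm
  have hprodpos : (0:ℝ) < ∏ i, ν i :=
    Finset.prod_pos (fun i _ => lt_of_lt_of_le one_pos (hν1 i))
  refine ⟨by rw [hdet, Complex.ofReal_re]; exact hprodpos,
          by rw [hdet, Complex.ofReal_im], ?_⟩
  -- sorted eigenvalues
  set σ : Equiv.Perm (Fin r) := Tuple.sort ν with hσ
  set τ : Fin r ≃ Fin r := Equiv.trans Fin.revPerm σ with hτ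
  set μ : Fin r → ℝ := fun i => ν (τ i) with hμ
  have hμ1 : ∀ i, 1 ≤ μ i := fun i => hν1 (τ i)
  have hμpos : ∀ i, 0 < μ i := fun i => lt_of_lt_of_le one_pos (hμ1 i)
  have hanti : ∀ i j : Fin r, i ≤ j → μ j ≤ μ i := by
    intro i j hij
    have h1 : Fin.rev j ≤ Fin.rev i := Fin.rev_le_rev.mpr hij
    have := Tuple.monotone_sort ν h1
    simpa [hμ, hτ, Function.comp] using this
  set B : Module.Basis (Fin r) ℂ V := f.toBasis.reindex τ.symm with hB
  have hBe : ∀ i, B i = f (τ i) := by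
    intro i
    rw [hB, Module.Basis.reindex_apply, Equiv.symm_symm, OrthonormalBasis.coe_toBasis]
  have hpe : ∀ i j, p (B i) (B j) = if i = j then 1 else 0 := by
    intro i j
    rw [hBe, hBe]
    rw [hortho (τ j) (τ i)]
    simp [EmbeddingLike.apply_eq_iff_eq, eq_comm]
  have hqe : ∀ i j, q (B i) (B j) = if i = j then (μ j : ℂ) else 0 := by
    intro i j
    rw [hT (B j) (B i), hBe j, happly (τ j), ← hBe j, hp.smul_right, hpe]
    rw [Complex.conj_ofReal]
    simp [hμ, mul_ite]
  -- quadratic forms in coordinates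
  have hrepr : ∀ w : V, w = ∑ i, B.repr w i • B i := fun w => (B.sum_repr w).symm
  have hP : ∀ w : V, (p w w).re = ∑ i, Complex.normSq (B.repr w i) := by
    intro w
    conv_lhs => rw [hrepr w]
    rw [hp.apply_sum B (fun i => B.repr w i)]
    have : ∀ i : Fin r, ∑ j, (B.repr w i * conj (B.repr w j)) * p (B i) (B j)
        = ((Complex.normSq (B.repr w i) : ℝ) : ℂ) := by
      intro i
      rw [Finset.sum_eq_single i]
      · rw [hpe]; simp [Complex.mul_conj]
      · intro b _ hb; rw [hpe]; simp [hb, if_neg (Ne.symm hb)]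
      · intro h; exact absurd (Finset.mem_univ i) h
    rw [Finset.sum_congr rfl (fun i _ => this i)]
    rw [Complex.re_sum]
    simp
  have hQ : ∀ w : V, (q w w).re = ∑ i, μ i * Complex.normSq (B.repr w i) := by
    intro w
    conv_lhs => rw [hrepr w]
    rw [hq.apply_sum B (fun i => B.repr w i)]
    have : ∀ i : Fin r, ∑ j, (B.repr w i * conj (B.repr w j)) * q (B i) (B j)
        = ((μ i * Complex.normSq (B.repr w i) : ℝ) : ℂ) := by
      intro i
      rw [Finset.sum_eq_single i]
      · rw [hqe]; simp [Complex.mul_conj]; ring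
      · intro b _ hb; rw [hqe]; simp [hb, if_neg (Ne.symm hb)]
      · intro h; exact absurd (Finset.mem_univ i) h
    rw [Finset.sum_congr rfl (fun i _ => this i)]
    rw [Complex.re_sum]
    simp
  -- span bounds
  have haA : ∀ (k : Fin r) (w : V), w ∈ Submodule.span ℂ (B '' {i | i ≤ k}) →
      μ k * (p w w).re ≤ (q w w).re := by
    intro k w hw
    rw [hP, hQ, Finset.mul_sum]
    refine Finset.sum_le_sum fun i _ => ?_
    by_cases hc : B.repr w i = 0
    · simp [hc]
    · have hi : i ∈ {i : Fin r | i ≤ k} := ((Module.Basis.mem_span_image B).mp hw)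
        (Finsupp.mem_support_iff.mpr hc)
      exact mul_le_mul_of_nonneg_right (hanti i k hi) (Complex.normSq_nonneg _)
  have haU : ∀ (k : Fin r) (w : V), w ∈ Submodule.span ℂ (B '' {i | k ≤ i}) →
      (q w w).re ≤ μ k * (p w w).re := by
    intro k w hw
    rw [hP, hQ, Finset.mul_sum]
    refine Finset.sum_le_sum fun i _ => ?_
    by_cases hc : B.repr w i = 0
    · simp [hc]
    · have hi : i ∈ {i : Fin r | k ≤ i} := ((Module.Basis.mem_span_image B).mp hw)
        (Finsupp.mem_support_iff.mpr hc)
      exact mul_le_mul_of_nonneg_right (hanti k i hi) (Complex.normSq_nonneg _)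
  -- finrank of spans of basis-vector subsets
  have hspan_rank : ∀ s : Finset (Fin r),
      Module.finrank ℂ (Submodule.span ℂ (B '' ↑s)) = s.card := by
    intro s
    have hli : LinearIndependent ℂ ((↑) : ↥((s.image B : Finset V) : Set V) → V) := by
      apply LinearIndepOn.mono ((linearIndepOn_id_range_iff B.injective).mpr B.linearIndependent)
      rw [Finset.coe_image]
      exact Set.image_subset_range B ↑s
    have hcard := finrank_span_finset_eq_card hli
    rw [show (B '' ↑s) = ((s.image B : Finset V) : Set V) by rw [Finset.coe_image], hcard,
      Finset.card_image_of_injective _ B.injective]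
  -- positivity of the quadratic forms
  have hPpos : ∀ w : V, w ≠ 0 → 0 < (p w w).re := hp.pos
  have hQpos : ∀ w : V, w ≠ 0 → 0 < (q w w).re := fun w hw =>
    lt_of_lt_of_le (hPpos w hw) (hle w)
  -- log-ratio
  have hL : ∀ w : V, w ≠ 0 →
      Real.log (N₂ w / N₁ w) = Real.log ((q w w).re / (p w w).re) / 2 := by
    intro w hw
    rw [hN₁, hN₂, ← Real.sqrt_div (hq.nonneg_re w)]
    exact Real.log_sqrt (div_nonneg (hq.nonneg_re w) (hp.nonneg_re w))
  have hL0 : ∀ w : V, w ≠ 0 → 0 ≤ Real.log (N₂ w / N₁ w) := by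
    intro w hw
    rw [hL w hw]
    have h1 : (1:ℝ) ≤ (q w w).re / (p w w).re :=
      (one_le_div (hPpos w hw)).mpr (hle w)
    have := Real.log_nonneg h1
    linarith
  have hLA : ∀ (k : Fin r) (w : V), w ≠ 0 → w ∈ Submodule.span ℂ (B '' {i | i ≤ k}) →
      Real.log (μ k) / 2 ≤ Real.log (N₂ w / N₁ w) := by
    intro k w hw hmem
    rw [hL w hw]
    have h1 : μ k ≤ (q w w).re / (p w w).re :=
      (le_div_iff₀ (hPpos w hw)).mpr (by have := haA k w hmem; linarith)
    have := Real.log_le_log (hμpos k) h1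
    linarith
  have hLU : ∀ (k : Fin r) (w : V), w ≠ 0 → w ∈ Submodule.span ℂ (B '' {i | k ≤ i}) →
      Real.log (N₂ w / N₁ w) ≤ Real.log (μ k) / 2 := by
    intro k w hw hmem
    rw [hL w hw]
    have h1 : (q w w).re / (p w w).re ≤ μ k :=
      (div_le_iff₀ (hPpos w hw)).mpr (by have := haU k w hmem; linarith)
    have h2 : 0 < (q w w).re / (p w w).re :=
      div_pos (hQpos w hw) (hPpos w hw)
    have := Real.log_le_log h2 h1
    linarith
  -- the per-index relSpec computation
  have main : ∀ j, 1 ≤ j → j ≤ r → ∀ (k : Fin r), (k : ℕ) = j - 1 →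
      relSpec N₁ N₂ j = Real.log (μ k) / 2 := by
    intro j hj1 hjr k hk
    have hbddb : ∀ W : Submodule ℂ V,
        BddBelow {y : ℝ | ∃ w : V, w ∈ W ∧ w ≠ 0 ∧ y = Real.log (N₂ w / N₁ w)} := by
      intro W
      exact ⟨0, fun y ⟨w, _, h0, hy⟩ => hy ▸ hL0 w h0⟩
    set A : Submodule ℂ V := Submodule.span ℂ (B '' {i | i ≤ k}) with hA
    set U : Submodule ℂ V := Submodule.span ℂ (B '' {i | k ≤ i}) with hU
    have hdimA : Module.finrank ℂ A = j := by
      rw [hA, show {i : Fin r | i ≤ k} = ↑(Finset.Iic k) by rw [Finset.coe_Iic]; rfl, hspan_rank,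
        Fin.card_Iic, hk]
      omega
    have hdimU : Module.finrank ℂ U = r - (j - 1) := by
      rw [hU, show {i : Fin r | k ≤ i} = ↑(Finset.Ici k) by rw [Finset.coe_Ici]; rfl, hspan_rank,
        Fin.card_Ici, hk]
    have hBkA : B k ∈ A := Submodule.subset_span ⟨k, by simp, rfl⟩
    have hBkU : B k ∈ U := Submodule.subset_span ⟨k, by simp, rfl⟩
    have hBk0 : B k ≠ 0 := B.ne_zero k
    have hLk : Real.log (N₂ (B k) / N₁ (B k)) = Real.log (μ k) / 2 :=
      le_antisymm (hLU k (B k) hBk0 hBkU) (hLA k (B k) hBk0 hBkA)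
    -- the value for the special subspace A
    have hinfA : sInf {y : ℝ | ∃ w : V, w ∈ A ∧ w ≠ 0 ∧ y = Real.log (N₂ w / N₁ w)}
        = Real.log (μ k) / 2 := by
      refine le_antisymm ?_ ?_
      · exact csInf_le (hbddb A) ⟨B k, hBkA, hBk0, hLk.symm⟩
      · exact le_csInf ⟨_, B k, hBkA, hBk0, rfl⟩
          (fun y ⟨w, hw, h0, hy⟩ => hy ▸ hLA k w h0 hw)
    -- every j-dimensional subspace gives value ≤ log (μ k) / 2
    have hub : ∀ (W : Submodule ℂ V), Module.finrank ℂ W = j →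
        sInf {y : ℝ | ∃ w : V, w ∈ W ∧ w ≠ 0 ∧ y = Real.log (N₂ w / N₁ w)}
          ≤ Real.log (μ k) / 2 := by
      intro W hW
      -- find a nonzero vector in W ⊓ U
      have hsum := Submodule.finrank_sup_add_finrank_inf_eq W U
      have hle_sup : Module.finrank ℂ ↥(W ⊔ U) ≤ r := Submodule.finrank_le _
      have hpos : 0 < Module.finrank ℂ ↥(W ⊓ U) := by
        rw [hW, hdimU] at hsum
        omega
      have hne : (W ⊓ U) ≠ ⊥ := by
        intro hbot
        rw [hbot] at hpos
        simp at hpos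
      obtain ⟨w, hwmem, hw0⟩ := Submodule.exists_mem_ne_zero_of_ne_bot hne
      calc sInf {y : ℝ | ∃ w : V, w ∈ W ∧ w ≠ 0 ∧ y = Real.log (N₂ w / N₁ w)}
          ≤ Real.log (N₂ w / N₁ w) :=
            csInf_le (hbddb W) ⟨w, hwmem.1, hw0, rfl⟩
        _ ≤ Real.log (μ k) / 2 := hLU k w hw0 hwmem.2
    rw [relSpec]
    refine le_antisymm ?_ ?_
    · refine csSup_le ⟨_, A, hdimA, hinfA.symm⟩ ?_
      rintro x ⟨W, hW, rfl⟩
      exact hub W hW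
    · refine le_csSup ⟨Real.log (μ k) / 2, ?_⟩ ⟨A, hdimA, hinfA.symm⟩
      rintro x ⟨W, hW, rfl⟩
      exact hub W hW
  -- assemble the sum
  set g : ℕ → ℝ := fun m => if h : m < r then Real.log (μ ⟨m, h⟩) / 2 else 0 with hg
  have habs : ∀ j ∈ Finset.Icc 1 r, |relSpec N₁ N₂ j| = g (j - 1) := by
    intro j hj
    rcases Finset.mem_Icc.mp hj with ⟨h1, h2⟩
    have hlt : j - 1 < r := by omega
    rw [main j h1 h2 ⟨j - 1, hlt⟩ rfl, hg]
    simp only [dif_pos hlt]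
    rw [abs_of_nonneg]
    have := Real.log_nonneg (hμ1 ⟨j - 1, hlt⟩)
    linarith
  rw [hdet, Complex.ofReal_re]
  have hstep1 : ∑ j ∈ Finset.Icc 1 r, |relSpec N₁ N₂ j|
      = ∑ j ∈ Finset.Icc 1 r, g (j - 1) := Finset.sum_congr rfl habs
  have hstep2 : ∑ j ∈ Finset.Icc 1 r, g (j - 1) = ∑ i ∈ Finset.range r, g i := by
    refine Finset.sum_nbij' (i := fun j => j - 1) (j := fun i => i + 1) ?_ ?_ ?_ ?_ ?_
    · intro a ha; rcases Finset.mem_Icc.mp ha with ⟨h1, h2⟩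
      simp only [Finset.mem_range]; omega
    · intro a ha; have := Finset.mem_range.mp ha
      simp only [Finset.mem_Icc]; omega
    · intro a ha; rcases Finset.mem_Icc.mp ha with ⟨h1, h2⟩; omega
    · intro a _; omega
    · intro a _; rfl
  have hstep3 : ∑ i ∈ Finset.range r, g i = ∑ i : Fin r, Real.log (μ i) / 2 := by
    rw [← Fin.sum_univ_eq_sum_range (fun m => g m) r]
    refine Finset.sum_congr rfl fun i _ => ?_
    rw [hg]
    simp only [dif_pos i.isLt, Fin.eta]
  rw [hstep1, hstep2, hstep3, ← Finset.sum_div,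
    ← Real.log_prod (fun i _ => ne_of_gt (hμpos i))]
  congr 2
  calc ∏ i, μ i = ∏ i, ν (τ i) := rfl
    _ = ∏ i, ν i := Equiv.prod_comp τ ν

end Aux

/-- For pointwise ordered Hermitian norms `H₁ ≤ H₂ ≤ H₃` on a finite-dimensional complex
vector space, `d₁(H₁,H₂) + d₁(H₂,H₃) = d₁(H₁,H₃)`. -/
theorem dOne_additive_of_ordered_hermitian
    {V : Type*} [AddCommGroup V] [Module ℂ V] [FiniteDimensional ℂ V]
    (H₁ H₂ H₃ : V → ℝ)
    (h1 : IsHermitianNorm H₁) (h2 : IsHermitianNorm H₂) (h3 : IsHermitianNorm H₃)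
    (h12 : ∀ v, H₁ v ≤ H₂ v) (h23 : ∀ v, H₂ v ≤ H₃ v) :
    dOne H₁ H₂ + dOne H₂ H₃ = dOne H₁ H₃ := by
  obtain ⟨p1, ha1, hm1, hc1, hpos1, hN1⟩ := h1
  obtain ⟨p2, ha2, hm2, hc2, hpos2, hN2⟩ := h2
  obtain ⟨p3, ha3, hm3, hc3, hpos3, hN3⟩ := h3
  have hp1 : GoodForm p1 := ⟨ha1, hm1, hc1, hpos1⟩
  have hp2 : GoodForm p2 := ⟨ha2, hm2, hc2, hpos2⟩
  have hp3 : GoodForm p3 := ⟨ha3, hm3, hc3, hpos3⟩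
  have hle12 : ∀ v, (p1 v v).re ≤ (p2 v v).re := by
    intro v
    have h := h12 v
    rw [hN1 v, hN2 v] at h
    exact (Real.sqrt_le_sqrt_iff (hp2.nonneg_re v)).mp h
  have hle23 : ∀ v, (p2 v v).re ≤ (p3 v v).re := by
    intro v
    have h := h23 v
    rw [hN2 v, hN3 v] at h
    exact (Real.sqrt_le_sqrt_iff (hp3.nonneg_re v)).mp h
  have hle13 : ∀ v, (p1 v v).re ≤ (p3 v v).re := fun v => (hle12 v).trans (hle23 v)
  obtain ⟨T12, hT12⟩ := exists_transfer hp1 hp2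
  obtain ⟨T23, hT23⟩ := exists_transfer hp2 hp3
  have hT13 : ∀ u v : V, p3 v u = p1 v ((T12.comp T23) u) := by
    intro u v
    rw [hT23 u v, hT12 (T23 u) v]
    rfl
  obtain ⟨hd12, hi12, hs12⟩ := pair_lemma hp1 hp2 hle12 hN1 hN2 hT12
  obtain ⟨hd23, hi23, hs23⟩ := pair_lemma hp2 hp3 hle23 hN2 hN3 hT23
  obtain ⟨hd13, hi13, hs13⟩ := pair_lemma hp1 hp3 hle13 hN1 hN3 hT13
  have hdetmul : (LinearMap.det (T12.comp T23)).re
      = (LinearMap.det T12).re * (LinearMap.det T23).re := by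
    rw [LinearMap.det_comp, Complex.mul_re, hi12, hi23]
    ring
  unfold dOne
  rw [hs12, hs23, hs13, hdetmul,
    Real.log_mul (ne_of_gt hd12) (ne_of_gt hd23), ← add_div]
  ring_nf
end

section
/- Let V be a finite-dimensional complex vector space with dim V = r, let N_V be a Hermitian norm on V (induced by a Hermitian inner product), and let F be a filtration of V with jumping numbers e_F(1) ≥ ⋯ ≥ e_F(r). Then for every t ≥ 0 and every i = 1,…,r, λ_i(N^t_{V,F}, N_V) = t·e_F(i), where N^t_{V,F} is the ray of norms associated with N_V and F. -/
open scoped BigOperators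

/-- A (decreasing, left-continuous, exhaustive, bounded) filtration of a complex
vector space by subspaces. -/
def IsSubspaceFiltration {V : Type*} [AddCommGroup V] [Module ℂ V]
    (F : ℝ → Submodule ℂ V) : Prop :=
  (∀ ⦃s t : ℝ⦄, s < t → F t ≤ F s) ∧
  (∀ t : ℝ, ∃ ε₀ > (0:ℝ), ∀ ε : ℝ, 0 < ε → ε < ε₀ → F (t - ε) = F t) ∧
  (∃ t₀ : ℝ, ∀ t ≤ t₀, F t = ⊤) ∧
  (∃ t₁ : ℝ, ∀ t : ℝ, t₁ ≤ t → F t = ⊥)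

/-- The `j`-th jumping number of a filtration: `e_F(j) = sup{t : dim F^t V ≥ j}`. -/
noncomputable def jumpNum {V : Type*} [AddCommGroup V] [Module ℂ V]
    (F : ℝ → Submodule ℂ V) (j : ℕ) : ℝ :=
  sSup {t : ℝ | j ≤ Module.finrank ℂ (F t)}

/-- The ray of norms associated with a norm `N` and a filtration `F`. -/
noncomputable def rayNorm {V : Type*} [AddCommGroup V] [Module ℂ V]
    (N : V → ℝ) (F : ℝ → Submodule ℂ V) (t : ℝ) (f : V) : ℝ :=
  sInf {c : ℝ | ∃ (n : ℕ) (g : Fin n → V) (μ : Fin n → ℝ),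
    (∀ i, g i ∈ F (μ i)) ∧ f = ∑ i, g i ∧
    c = ∑ i, Real.exp (-(t * μ i)) * N (g i)}

/-! The Hermitian form makes `V` an inner product space. For `f ∈ F^μ` the one-term
decomposition gives `‖f‖^t ≤ e^{-tμ} ‖f‖`. For `w ⊥ F^s`, pairing a decomposition
`w = ∑ f_k` with `w` gives `‖w‖² = ∑ Re⟪f_k, w⟫ ≤ e^{ts} (∑ e^{-tμ_k} ‖f_k‖) ‖w‖`, because the
terms with `μ_k ≥ s` vanish; hence `‖w‖^t ≥ e^{-ts} ‖w‖`. So `log (‖w‖ / ‖w‖^t) ≥ t e_F(i)` on an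
`i`-dimensional subspace of `F^{e_F(i)}`, while for `s > e_F(i)` we have `dim F^s < i`, so every
`i`-dimensional subspace contains some `w ≠ 0` orthogonal to `F^s`, where the ratio is at most
`t s`. -/

open Module Real Topology

theorem le_log_div_iff {x y c : ℝ} (hx : 0 < x) (hy : 0 < y) :
    c ≤ log (x / y) ↔ y ≤ exp (-c) * x := by
  rw [le_log_iff_exp_le (div_pos hx hy), le_div_iff₀ hy, exp_neg, ← div_eq_inv_mul,
    le_div_iff₀ (exp_pos c), mul_comm]

theorem log_div_le_iff {x y c : ℝ} (hx : 0 < x) (hy : 0 < y) :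
    log (x / y) ≤ c ↔ exp (-c) * x ≤ y := by
  rw [log_le_iff_le_exp (div_pos hx hy), div_le_iff₀ hy, exp_neg, ← div_eq_inv_mul,
    div_le_iff₀ (exp_pos c), mul_comm]

theorem Submodule.exists_le_finrank_eq {k V : Type*} [DivisionRing k] [AddCommGroup V]
    [Module k V] {K : Submodule k V} {n : ℕ} (hn : n ≤ finrank k K) :
    ∃ W ≤ K, finrank k W = n := by
  obtain ⟨f, hf⟩ := exists_linearIndependent_of_le_finrank hn
  refine ⟨span k (Set.range (K.subtype ∘ f)), ?_, ?_⟩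
  · rw [span_le]
    rintro _ ⟨j, rfl⟩
    exact (f j).2
  · rw [finrank_span_eq_card (hf.map' K.subtype K.ker_subtype), Fintype.card_fin]

section Filtration

variable {V : Type*} [AddCommGroup V] [Module ℂ V] {F : ℝ → Submodule ℂ V}

theorem IsSubspaceFiltration.antitone (hF : IsSubspaceFiltration F) : Antitone F := by
  intro s t hst
  rcases hst.eq_or_lt with rfl | hlt
  · exact le_rfl
  · exact hF.1 hlt

/-- Left continuity of `F` is what makes the superlevel set closed, i.e. equal to
`Iic (jumpNum F i)` rather than possibly `Iio (jumpNum F i)`. -/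
theorem IsSubspaceFiltration.le_finrank_iff_le_jumpNum [FiniteDimensional ℂ V]
    (hF : IsSubspaceFiltration F) {i : ℕ} (hi1 : 1 ≤ i) (hi2 : i ≤ finrank ℂ V) {s : ℝ} :
    i ≤ finrank ℂ (F s) ↔ s ≤ jumpNum F i := by
  have hanti := hF.antitone
  obtain ⟨-, hleft, ⟨t₀, ht₀⟩, ⟨t₁, ht₁⟩⟩ := hF
  set S := {u : ℝ | i ≤ finrank ℂ (F u)}
  have hS_lower : ∀ ⦃u v⦄, v ≤ u → u ∈ S → v ∈ S := fun u v hvu hu =>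
    hu.trans (Submodule.finrank_mono (hanti hvu))
  have hS_nonempty : t₀ ∈ S := by
    show i ≤ finrank ℂ (F t₀)
    rwa [ht₀ t₀ le_rfl, finrank_top]
  have hS_bdd : BddAbove S := by
    refine ⟨t₁, fun u hu => le_of_not_gt fun hlt => ?_⟩
    have hu' : i ≤ finrank ℂ (F u) := hu
    rw [ht₁ u hlt.le, finrank_bot] at hu'
    omega
  refine ⟨fun hs => le_csSup hS_bdd hs, fun hs => ?_⟩
  obtain ⟨ε₀, hε₀, hF_eq⟩ := hleft s
  obtain ⟨u, hu, hlt⟩ := exists_lt_of_lt_csSup ⟨t₀, hS_nonempty⟩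
    (show s - ε₀ < sSup S from lt_of_lt_of_le (by linarith) hs)
  rcases le_or_gt s u with hsu | hus
  · exact hS_lower hsu hu
  · have hFu := hF_eq (s - u) (by linarith) (by linarith)
    rw [sub_sub_cancel] at hFu
    show i ≤ finrank ℂ (F s)
    rwa [← hFu]

end Filtration

section RelSpec

variable {V : Type*} [AddCommGroup V] [Module ℂ V] {N₁ N₂ : V → ℝ} {j : ℕ} {a b c : ℝ}

theorem bddBelow_log_div (ha : ∀ w ≠ 0, a ≤ log (N₂ w / N₁ w)) (W : Submodule ℂ V) :
    BddBelow {y | ∃ w : V, w ∈ W ∧ w ≠ 0 ∧ y = log (N₂ w / N₁ w)} :=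
  ⟨a, by rintro _ ⟨w, -, hw, rfl⟩; exact ha w hw⟩

theorem le_relSpec (ha : ∀ w ≠ 0, a ≤ log (N₂ w / N₁ w)) (hb : ∀ w ≠ 0, log (N₂ w / N₁ w) ≤ b)
    (hj : 1 ≤ j) {W : Submodule ℂ V} (hW : finrank ℂ W = j)
    (hc : ∀ w ∈ W, w ≠ 0 → c ≤ log (N₂ w / N₁ w)) : c ≤ relSpec N₁ N₂ j := by
  have hne : ∀ W' : Submodule ℂ V, finrank ℂ W' = j → ∃ w ∈ W', w ≠ 0 := by
    refine fun W' hW' => Submodule.exists_mem_ne_zero_of_ne_bot ?_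
    rintro rfl
    rw [finrank_bot] at hW'
    omega
  refine le_trans ?_ (le_csSup ⟨b, ?_⟩ ⟨W, hW, rfl⟩)
  · obtain ⟨w, hwW, hw⟩ := hne W hW
    exact le_csInf ⟨_, w, hwW, hw, rfl⟩ fun _ ⟨w, hwW, hw, hy⟩ => hy ▸ hc w hwW hw
  · rintro _ ⟨W', hW', rfl⟩
    obtain ⟨w, hwW, hw⟩ := hne W' hW'
    exact (csInf_le (bddBelow_log_div ha W') ⟨w, hwW, hw, rfl⟩).trans (hb w hw)

theorem relSpec_le (ha : ∀ w ≠ 0, a ≤ log (N₂ w / N₁ w)) (hj : j ≤ finrank ℂ V)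
    (hc : ∀ W : Submodule ℂ V, finrank ℂ W = j → ∃ w ∈ W, w ≠ 0 ∧ log (N₂ w / N₁ w) ≤ c) :
    relSpec N₁ N₂ j ≤ c := by
  obtain ⟨W, -, hW⟩ := Submodule.exists_le_finrank_eq (K := (⊤ : Submodule ℂ V)) (n := j)
    (by rwa [finrank_top])
  refine csSup_le ⟨_, W, hW, rfl⟩ ?_
  rintro _ ⟨W, hW, rfl⟩
  obtain ⟨w, hwW, hw, hwc⟩ := hc W hW
  exact (csInf_le (bddBelow_log_div ha W) ⟨w, hwW, hw, rfl⟩).trans hwc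

end RelSpec

theorem rayNorm_le_of_mem {V : Type*} [AddCommGroup V] [Module ℂ V] {N : V → ℝ}
    {F : ℝ → Submodule ℂ V} (t : ℝ) (hN : ∀ v, 0 ≤ N v) {f : V} {μ : ℝ} (hf : f ∈ F μ) :
    rayNorm N F t f ≤ exp (-(t * μ)) * N f := by
  refine csInf_le ⟨0, ?_⟩ ⟨1, fun _ => f, fun _ => μ, fun _ => hf, by simp, by simp⟩
  rintro _ ⟨n, g, μ, -, -, rfl⟩
  exact Finset.sum_nonneg fun k _ => mul_nonneg (exp_nonneg _) (hN _)

section InnerProductSpace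

variable {E : Type*} [NormedAddCommGroup E] [InnerProductSpace ℂ E] {F : ℝ → Submodule ℂ E}
  {t s μ : ℝ} {g w : E}

theorem Submodule.exists_mem_orthogonal_ne_zero [FiniteDimensional ℂ E] {K W : Submodule ℂ E}
    (h : finrank ℂ K < finrank ℂ W) : ∃ w ∈ W, w ∈ Kᗮ ∧ w ≠ 0 := by
  by_contra! hdisj
  have := Submodule.finrank_add_finrank_le_of_disjoint (Submodule.disjoint_def.2 hdisj)
  have := K.finrank_add_finrank_orthogonal
  omega

theorem re_inner_le_exp_mul_norm_mul_norm (hF : Antitone F) (ht : 0 ≤ t)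
    (hg : g ∈ F μ) (hw : w ∈ (F s)ᗮ) :
    RCLike.re (inner ℂ g w) ≤ exp (t * (s - μ)) * ‖g‖ * ‖w‖ := by
  rcases le_or_gt s μ with hsμ | hμs
  · rw [(F s).mem_orthogonal w |>.1 hw g (hF hsμ hg), map_zero]
    positivity
  · calc RCLike.re (inner ℂ g w) ≤ ‖g‖ * ‖w‖ := re_inner_le_norm g w
      _ ≤ exp (t * (s - μ)) * (‖g‖ * ‖w‖) :=
        le_mul_of_one_le_left (by positivity) (one_le_exp (by nlinarith))
      _ = exp (t * (s - μ)) * ‖g‖ * ‖w‖ := by ring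

theorem exp_mul_norm_le_rayNorm (hF : Antitone F) (ht : 0 ≤ t) (hw : w ∈ (F s)ᗮ)
    {μ₀ : ℝ} (hμ₀ : w ∈ F μ₀) : exp (-(t * s)) * ‖w‖ ≤ rayNorm (norm : E → ℝ) F t w := by
  refine le_csInf ⟨_, 1, fun _ => w, fun _ => μ₀, fun _ => hμ₀, by simp, rfl⟩ ?_
  rintro _ ⟨n, g, μ, hg, rfl, rfl⟩
  set w := ∑ k, g k
  have key : ‖w‖ * ‖w‖ ≤ (exp (t * s) * ∑ k, exp (-(t * μ k)) * ‖g k‖) * ‖w‖ :=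
    calc ‖w‖ * ‖w‖ = ∑ k, RCLike.re (inner ℂ (g k) w) := by
          rw [← inner_self_eq_norm_mul_norm (𝕜 := ℂ), sum_inner, map_sum]
      _ ≤ ∑ k, exp (t * (s - μ k)) * ‖g k‖ * ‖w‖ :=
          Finset.sum_le_sum fun k _ => re_inner_le_exp_mul_norm_mul_norm hF ht (hg k) hw
      _ = (exp (t * s) * ∑ k, exp (-(t * μ k)) * ‖g k‖) * ‖w‖ := by
          rw [Finset.mul_sum, Finset.sum_mul]
          refine Finset.sum_congr rfl fun k _ => ?_
          rw [mul_sub, sub_eq_add_neg, exp_add]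
          ring
  rw [exp_neg, inv_mul_le_iff₀ (exp_pos _)]
  rcases (norm_nonneg w).eq_or_lt with hw0 | hw0
  · rw [← hw0]
    exact mul_nonneg (exp_nonneg _) (Finset.sum_nonneg fun k _ => by positivity)
  · exact le_of_mul_le_mul_right key hw0

theorem rayNorm_pos (hF : IsSubspaceFiltration F) (ht : 0 ≤ t) (hw : w ≠ 0) :
    0 < rayNorm (norm : E → ℝ) F t w := by
  obtain ⟨-, -, ⟨t₀, ht₀⟩, ⟨t₁, ht₁⟩⟩ := id hF
  have hw_perp : w ∈ (F t₁)ᗮ := by simp [ht₁ t₁ le_rfl]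
  have hw_mem : w ∈ F t₀ := by simp [ht₀ t₀ le_rfl]
  exact lt_of_lt_of_le (by positivity) (exp_mul_norm_le_rayNorm hF.antitone ht hw_perp hw_mem)

theorem le_log_norm_div_rayNorm (hF : IsSubspaceFiltration F) (ht : 0 ≤ t)
    (hw : w ∈ F μ) (hw0 : w ≠ 0) : t * μ ≤ log (‖w‖ / rayNorm norm F t w) :=
  (le_log_div_iff (norm_pos_iff.2 hw0) (rayNorm_pos hF ht hw0)).2
    (rayNorm_le_of_mem t norm_nonneg hw)

theorem log_norm_div_rayNorm_le (hF : IsSubspaceFiltration F) (ht : 0 ≤ t)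
    (hw : w ∈ (F s)ᗮ) (hw0 : w ≠ 0) : log (‖w‖ / rayNorm norm F t w) ≤ t * s := by
  obtain ⟨-, -, ⟨t₀, ht₀⟩, -⟩ := id hF
  exact (log_div_le_iff (norm_pos_iff.2 hw0) (rayNorm_pos hF ht hw0)).2
    (exp_mul_norm_le_rayNorm hF.antitone ht hw (μ₀ := t₀) (by simp [ht₀ t₀ le_rfl]))

theorem relSpec_rayNorm_norm [FiniteDimensional ℂ E] (hF : IsSubspaceFiltration F) (ht : 0 ≤ t)
    {i : ℕ} (hi1 : 1 ≤ i) (hi2 : i ≤ finrank ℂ E) :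
    relSpec (rayNorm (norm : E → ℝ) F t) norm i = t * jumpNum F i := by
  obtain ⟨-, -, ⟨t₀, ht₀⟩, ⟨t₁, ht₁⟩⟩ := id hF
  have ha : ∀ w : E, w ≠ 0 → t * t₀ ≤ log (‖w‖ / rayNorm norm F t w) := fun w hw0 =>
    le_log_norm_div_rayNorm hF ht (by simp [ht₀ t₀ le_rfl]) hw0
  have hb : ∀ w : E, w ≠ 0 → log (‖w‖ / rayNorm norm F t w) ≤ t * t₁ := fun w hw0 =>
    log_norm_div_rayNorm_le hF ht (by simp [ht₁ t₁ le_rfl]) hw0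
  apply le_antisymm
  · refine ge_of_tendsto (x := 𝓝[>] (jumpNum F i))
      ((continuous_const_mul t).tendsto _ |>.mono_left nhdsWithin_le_nhds)
      (eventually_nhdsWithin_of_forall fun s (hs : jumpNum F i < s) => ?_)
    have hFs : finrank ℂ (F s) < i :=
      lt_of_not_ge fun h => hs.not_ge ((hF.le_finrank_iff_le_jumpNum hi1 hi2).1 h)
    refine relSpec_le ha hi2 fun W hW => ?_
    obtain ⟨w, hwW, hw, hw0⟩ := Submodule.exists_mem_orthogonal_ne_zero (hW ▸ hFs)
    exact ⟨w, hwW, hw0, log_norm_div_rayNorm_le hF ht hw hw0⟩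
  · obtain ⟨W, hWF, hW⟩ :=
      Submodule.exists_le_finrank_eq ((hF.le_finrank_iff_le_jumpNum hi1 hi2).2 le_rfl)
    exact le_relSpec ha hb hi1 hW fun w hw hw0 => le_log_norm_div_rayNorm hF ht (hWF hw) hw0

end InnerProductSpace

/-- Mathlib's inner product is conjugate-linear in the first slot, so the form `p` of
`IsHermitianNorm` enters with its arguments swapped. -/
theorem IsHermitianNorm.exists_innerProductSpaceCore {V : Type*} [AddCommGroup V] [Module ℂ V]
    {N : V → ℝ} (hN : IsHermitianNorm N) :
    ∃ c : InnerProductSpace.Core ℂ V, ∀ v, N v = √(RCLike.re (c.inner v v)) := by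
  obtain ⟨p, hadd, hsmul, hconj, hpos, hN⟩ := hN
  have hzero : ∀ u, p 0 u = 0 := fun u => by simpa using hadd 0 0 u
  refine ⟨{ inner := fun x y => p y x
            conj_inner_symm := fun x y => (hconj x y).symm
            re_inner_nonneg := fun x => ?_
            add_left := fun x y z => ?_
            smul_left := fun x y r => ?_
            definite := fun x hx => not_not.1 fun h => by simpa [hx] using hpos x h }, hN⟩
  · rcases eq_or_ne x 0 with rfl | hx
    · simp [hzero]
    · exact (hpos x hx).le
  · show p z (x + y) = p z x + p z y
    rw [hconj (x + y), hadd, map_add, ← hconj, ← hconj]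
  · show p y (r • x) = starRingEnd ℂ r * p y x
    rw [hconj (r • x), hsmul, map_mul, ← hconj]

/-- For a Hermitian norm `N` and a filtration `F` on an `r`-dimensional complex vector
space, the logarithmic relative spectrum of the ray of norms with respect to its
initial point is given exactly by the jumping numbers:
`λ_i(N^t_{V,F}, N_V) = t·e_F(i)` for all `t ≥ 0` and `i = 1,…,r`. -/
theorem relSpec_rayNorm_hermitian
    {V : Type*} [AddCommGroup V] [Module ℂ V] [FiniteDimensional ℂ V]
    (N : V → ℝ) (hN : IsHermitianNorm N) (F : ℝ → Submodule ℂ V) (hF : IsSubspaceFiltration F)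
    (t : ℝ) (ht : 0 ≤ t)
    (i : ℕ) (hi1 : 1 ≤ i) (hi2 : i ≤ Module.finrank ℂ V) :
    relSpec (rayNorm N F t) N i = t * jumpNum F i := by
  obtain ⟨c, hc⟩ := hN.exists_innerProductSpaceCore
  let _ : NormedAddCommGroup V := c.toNormedAddCommGroup
  let _ : InnerProductSpace ℂ V := InnerProductSpace.ofCore c.toCore
  obtain rfl : N = (‖·‖) := funext hc
  exact relSpec_rayNorm_norm hF ht hi1 hi2
end

section
/- Let V be a finite-dimensional complex vector space with dim V = r, let F be a filtration of V with jumping numbers e_F(1) ≥ ⋯ ≥ e_F(r), let N_V be any norm on V, and let N_H be a Hermitian norm on V induced by an inner product ⟨·,·⟩. Suppose (s₁,…,s_r) is an orthonormal basis of (V,⟨·,·⟩) adapted to F, i.e. sᵢ ∈ F^{e_F(i)} V for every i. For t ≥ 0 let N^{⊥,t}_{H,F} be the Hermitian norm on V for which the basis (e^{t·e_F(1)}s₁, …, e^{t·e_F(r)}s_r) is orthonormal. Then for every t ≥ 0, d_∞(N^{⊥,t}_{H,F}, N^t_{V,F}) ≤ d_∞(N_H, N_V) + log r, where N^t_{V,F}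 is the ray of norms associated with N_V and F. -/
open scoped BigOperators

/-- A norm on a complex vector space, given as a function with the usual axioms. -/
def IsNorm {V : Type*} [AddCommGroup V] [Module ℂ V] (N : V → ℝ) : Prop :=
  (∀ v, 0 ≤ N v) ∧ (∀ v, N v = 0 ↔ v = 0) ∧
  (∀ (c : ℂ) (v : V), N (c • v) = ‖c‖ * N v) ∧
  (∀ v w, N (v + w) ≤ N v + N w)

/-- A (decreasing, left-continuous, exhaustive, bounded) filtration of a complex
vector space by subspaces. -/
def IsFiltrationOfSubmodules {V : Type*} [AddCommGroup V] [Module ℂ V]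
    (F : ℝ → Submodule ℂ V) : Prop :=
  (∀ ⦃s t : ℝ⦄, s < t → F t ≤ F s) ∧
  (∀ t : ℝ, ∃ ε₀ > (0:ℝ), ∀ ε : ℝ, 0 < ε → ε < ε₀ → F (t - ε) = F t) ∧
  (∃ t₀ : ℝ, ∀ t ≤ t₀, F t = ⊤) ∧
  (∃ t₁ : ℝ, ∀ t : ℝ, t₁ ≤ t → F t = ⊥)

/-- `d_∞(N₁,N₂)`: the minimal constant `C ≥ 0` such that
`e^{-C}·N₂ ≤ N₁ ≤ e^{C}·N₂` pointwise. -/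
noncomputable def dInfty {V : Type*} [AddCommGroup V] [Module ℂ V] (N₁ N₂ : V → ℝ) : ℝ :=
  sInf {C : ℝ | 0 ≤ C ∧ ∀ v, Real.exp (-C) * N₂ v ≤ N₁ v ∧ N₁ v ≤ Real.exp C * N₂ v}

/-! ### Auxiliary lemmas -/

lemma normCompare {V : Type*} [AddCommGroup V] [Module ℂ V] [FiniteDimensional ℂ V]
    {n : ℕ} (φ : V ≃ₗ[ℂ] EuclideanSpace ℂ (Fin n)) (N : V → ℝ) (hN : IsNorm N) :
    ∃ K : ℝ, 0 < K ∧ (∀ v, N v ≤ K * ‖φ v‖) ∧ (∀ v, ‖φ v‖ ≤ K * N v) := by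
  letI : NormedAddCommGroup V := AddGroupNorm.toNormedAddCommGroup
    { toFun := N
      map_zero' := (hN.2.1 0).2 rfl
      add_le' := hN.2.2.2
      neg' := fun v => by
        have h := hN.2.2.1 (-1) v
        simpa using h
      eq_zero_of_map_eq_zero' := fun v h => (hN.2.1 v).1 h }
  letI : NormedSpace ℂ V :=
    { norm_smul_le := fun c v => le_of_eq (by
        show N (c • v) = ‖c‖ * N v
        rw [hN.2.2.1 c v] ) }
  have hnorm : ∀ v : V, ‖v‖ = N v := fun v => rfl
  let A : V →L[ℂ] EuclideanSpace ℂ (Fin n) :=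
    ⟨φ.toLinearMap, φ.toLinearMap.continuous_of_finiteDimensional⟩
  let B : EuclideanSpace ℂ (Fin n) →L[ℂ] V :=
    ⟨φ.symm.toLinearMap, φ.symm.toLinearMap.continuous_of_finiteDimensional⟩
  refine ⟨max ‖A‖ ‖B‖ + 1, by positivity, fun v => ?_, fun v => ?_⟩
  · have h := B.le_opNorm (φ v)
    simp only [B, ContinuousLinearMap.coe_mk', LinearEquiv.coe_coe, φ.symm_apply_apply] at h
    rw [hnorm] at h
    calc N v ≤ ‖B‖ * ‖φ v‖ := h
    _ ≤ (max ‖A‖ ‖B‖ + 1) * ‖φ v‖ := by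
        apply mul_le_mul_of_nonneg_right _ (norm_nonneg _)
        have := le_max_right ‖A‖ ‖B‖; linarith
  · have h := A.le_opNorm v
    rw [hnorm] at h
    calc ‖φ v‖ = ‖A v‖ := rfl
    _ ≤ ‖A‖ * N v := h
    _ ≤ (max ‖A‖ ‖B‖ + 1) * N v := by
        apply mul_le_mul_of_nonneg_right _ (hN.1 v)
        have := le_max_left ‖A‖ ‖B‖; linarith

lemma dInfty_mem {V : Type*} [AddCommGroup V] [Module ℂ V] (N1 N2 : V → ℝ)
    (h1 : ∀ v, 0 ≤ N1 v) (h2 : ∀ v, 0 ≤ N2 v)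
    (hne : ∃ C : ℝ, 0 ≤ C ∧ ∀ v, Real.exp (-C) * N2 v ≤ N1 v ∧ N1 v ≤ Real.exp C * N2 v) :
    0 ≤ dInfty N1 N2 ∧
      ∀ v, Real.exp (-(dInfty N1 N2)) * N2 v ≤ N1 v ∧ N1 v ≤ Real.exp (dInfty N1 N2) * N2 v := by
  simp only [dInfty]
  set S := {C : ℝ | 0 ≤ C ∧ ∀ v, Real.exp (-C) * N2 v ≤ N1 v ∧ N1 v ≤ Real.exp C * N2 v} with hS
  obtain ⟨C₀, hC₀⟩ := hne
  have hSne : S.Nonempty := ⟨C₀, hC₀⟩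
  have hC0 : 0 ≤ sInf S := le_csInf hSne fun x hx => hx.1
  refine ⟨hC0, fun v => ⟨?_, ?_⟩⟩
  · rcases eq_or_lt_of_le (h1 v) with hN1 | hN1
    · have hN2 : N2 v = 0 := by
        have h := (hC₀.2 v).1
        rw [← hN1] at h
        nlinarith [Real.exp_pos (-C₀), h2 v]
      rw [hN2, ← hN1]; simp
    · rcases eq_or_lt_of_le (h2 v) with hN2 | hN2
      · rw [← hN2]; simp [le_of_lt hN1]
      · have hlog : Real.log (N2 v / N1 v) ≤ sInf S := by
          apply le_csInf hSne
          intro C hC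
          rw [Real.log_le_iff_le_exp (by positivity)]
          rw [div_le_iff₀ hN1]
          have h := (hC.2 v).1
          have h' : N2 v ≤ Real.exp C * N1 v := by
            have hh := mul_le_mul_of_nonneg_left h (le_of_lt (Real.exp_pos C))
            rw [← mul_assoc, ← Real.exp_add] at hh
            simpa using hh
          linarith [h']
        have : N2 v / N1 v ≤ Real.exp (sInf S) := by
          calc N2 v / N1 v = Real.exp (Real.log (N2 v / N1 v)) :=
                (Real.exp_log (by positivity)).symm
          _ ≤ Real.exp (sInf S) := Real.exp_le_exp.2 hlog
        have h' : N2 v ≤ Real.exp (sInf S) * N1 v := by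
          rw [div_le_iff₀ hN1] at this; linarith
        have hh := mul_le_mul_of_nonneg_left h' (le_of_lt (Real.exp_pos (-(sInf S))))
        rw [← mul_assoc, ← Real.exp_add] at hh
        simpa using hh
  · rcases eq_or_lt_of_le (h2 v) with hN2 | hN2
    · have hN1 : N1 v = 0 := by
        have h := (hC₀.2 v).2
        rw [← hN2] at h
        have := h1 v; simpa using le_antisymm (by simpa using h) this
      rw [hN1, ← hN2]; simp
    · rcases eq_or_lt_of_le (h1 v) with hN1 | hN1
      · rw [← hN1]; positivity
      · have hlog : Real.log (N1 v / N2 v) ≤ sInf S := by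
          apply le_csInf hSne
          intro C hC
          rw [Real.log_le_iff_le_exp (by positivity), div_le_iff₀ hN2]
          linarith [(hC.2 v).2]
        have : N1 v / N2 v ≤ Real.exp (sInf S) := by
          calc N1 v / N2 v = Real.exp (Real.log (N1 v / N2 v)) :=
                (Real.exp_log (by positivity)).symm
          _ ≤ Real.exp (sInf S) := Real.exp_le_exp.2 hlog
        rw [div_le_iff₀ hN2] at this; linarith

lemma jump_bddAbove {V : Type*} [AddCommGroup V] [Module ℂ V]
    (F : ℝ → Submodule ℂ V) (hF : IsFiltrationOfSubmodules F) (j : ℕ) (hj : 1 ≤ j) :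
    BddAbove {s : ℝ | j ≤ Module.finrank ℂ (F s)} := by
  obtain ⟨t₁, ht₁⟩ := hF.2.2.2
  refine ⟨t₁, fun x hx => ?_⟩
  by_contra hxt
  push_neg at hxt
  have hb : F x = ⊥ := ht₁ x (le_of_lt hxt)
  have h0 : Module.finrank ℂ (F x) = 0 := by rw [hb]; exact finrank_bot ℂ V
  simp only [Set.mem_setOf_eq, h0] at hx
  omega

lemma le_jumpNum {V : Type*} [AddCommGroup V] [Module ℂ V]
    (F : ℝ → Submodule ℂ V) (hF : IsFiltrationOfSubmodules F) (j : ℕ) (hj : 1 ≤ j)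
    (μ : ℝ) (hμ : j ≤ Module.finrank ℂ (F μ)) : μ ≤ jumpNum F j :=
  le_csSup (jump_bddAbove F hF j hj) hμ

lemma repr_eq_zero {V : Type*} [AddCommGroup V] [Module ℂ V] [FiniteDimensional ℂ V]
    {r : ℕ} (hr : Module.finrank ℂ V = r)
    (F : ℝ → Submodule ℂ V) (hF : IsFiltrationOfSubmodules F)
    (b : Module.Basis (Fin r) ℂ V)
    (hadapted : ∀ i : Fin r, b i ∈ F (jumpNum F ((i : ℕ) + 1)))
    {μ : ℝ} {g : V} (hg : g ∈ F μ) {i : Fin r}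
    (hi : jumpNum F ((i : ℕ) + 1) < μ) : b.repr g i = 0 := by
  classical
  set sF : Finset (Fin r) := Finset.univ.filter (fun j => μ ≤ jumpNum F ((j : ℕ) + 1)) with hsF
  set W : Submodule ℂ V := Submodule.span ℂ (b '' ↑sF) with hW
  have hWle : W ≤ F μ := by
    rw [hW, Submodule.span_le]
    rintro _ ⟨j, hj, rfl⟩
    have hj' : μ ≤ jumpNum F ((j : ℕ) + 1) := by
      simp only [hsF, Finset.coe_filter, Finset.mem_coe, Set.mem_setOf_eq] at hj
      exact hj.2
    rcases eq_or_lt_of_le hj' with h | h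
    · rw [h]; exact hadapted j
    · exact hF.1 h (hadapted j)
  have hcard : Module.finrank ℂ (F μ) ≤ sF.card := by
    set d := Module.finrank ℂ (F μ) with hd
    rcases Nat.eq_zero_or_pos d with h0 | hdpos
    · omega
    · have hdr : d ≤ r := by rw [← hr]; exact Submodule.finrank_le _
      have hmem : ∀ j : Fin r, (j : ℕ) < d → j ∈ sF := by
        intro j hjd
        simp only [hsF, Finset.mem_filter, Finset.mem_univ, true_and]
        exact le_jumpNum F hF _ (by omega) μ (by omega)
      have hsub : (Finset.univ : Finset (Fin d)).image (Fin.castLE hdr) ⊆ sF := by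
        intro x hx
        simp only [Finset.mem_image, Finset.mem_univ, true_and] at hx
        obtain ⟨y, rfl⟩ := hx
        exact hmem _ (by simpa [Fin.coe_castLE] using y.isLt)
      calc d = ((Finset.univ : Finset (Fin d)).image (Fin.castLE hdr)).card := by
              rw [Finset.card_image_of_injective _ (Fin.castLE_injective hdr)]
              simp
      _ ≤ sF.card := Finset.card_le_card hsub
  have hWcard : sF.card ≤ Module.finrank ℂ W := by
    have hli0 : LinearIndependent ℂ (fun x : ↑(↑sF : Set (Fin r)) => b ↑x) :=
      b.linearIndependent.comp _ Subtype.val_injective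
    have hli : LinearIndependent ℂ (Subtype.val : ↑(b '' ↑sF) → V) := LinearIndepOn.id_image hli0
    have hrank : Module.finrank ℂ W = sF.card := by
      rw [hW, finrank_span_set_eq_card hli, Set.toFinset_image,
        Finset.card_image_of_injective _ b.injective]
      simp
    omega
  have hFW : F μ = W :=
    (Submodule.eq_of_le_of_finrank_le hWle (le_trans hcard hWcard)).symm
  have hgW : g ∈ W := hFW ▸ hg
  have hker : W ≤ LinearMap.ker (b.coord i) := by
    rw [hW, Submodule.span_le]
    rintro _ ⟨j, hj, rfl⟩
    have hj' : μ ≤ jumpNum F ((j : ℕ) + 1) := by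
      simp only [hsF, Finset.coe_filter, Finset.mem_coe, Set.mem_setOf_eq] at hj
      exact hj.2
    have hne : j ≠ i := by
      rintro rfl; linarith
    simp [LinearMap.mem_ker, Module.Basis.coord_apply, Module.Basis.repr_self, Finsupp.single_apply, hne]
  have := hker hgW
  simpa [LinearMap.mem_ker, Module.Basis.coord_apply] using this

/-- Comparison of the two ray constructions: for a norm `N_V`, a Hermitian norm `N_H`
induced by an inner product `p`, and an orthonormal basis `(s₁,…,s_r)` adapted to the
filtration `F` (i.e. `sᵢ ∈ F^{e_F(i)}V`), the Hermitian ray `N^{⊥,t}_{H,F}` — the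
Hermitian norm making `(e^{t·e_F(i)}sᵢ)ᵢ` orthonormal — satisfies
`d_∞(N^{⊥,t}_{H,F}, N^t_{V,F}) ≤ d_∞(N_H, N_V) + log r` for all `t ≥ 0`. -/
theorem dInfty_hermitian_ray_le
    {V : Type*} [AddCommGroup V] [Module ℂ V] [FiniteDimensional ℂ V]
    (r : ℕ) (hr : Module.finrank ℂ V = r)
    (NV : V → ℝ) (hNV : IsNorm NV)
    (p : V → V → ℂ)
    (hadd : ∀ u v w, p (u + v) w = p u w + p v w)
    (hsmul : ∀ (c : ℂ) (u v : V), p (c • u) v = c * p u v)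
    (hconj : ∀ u v, p v u = (starRingEnd ℂ) (p u v))
    (hpos : ∀ v, v ≠ 0 → 0 < (p v v).re)
    (NH : V → ℝ) (hNH : ∀ v, NH v = Real.sqrt (p v v).re)
    (F : ℝ → Submodule ℂ V) (hF : IsFiltrationOfSubmodules F)
    (b : Module.Basis (Fin r) ℂ V)
    (horthonormal : ∀ i j : Fin r, p (b i) (b j) = if i = j then 1 else 0)
    (hadapted : ∀ i : Fin r, b i ∈ F (jumpNum F ((i : ℕ) + 1)))
    (t : ℝ) (ht : 0 ≤ t) :
    dInfty
      (fun f : V => Real.sqrt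
        (∑ i : Fin r,
          Real.exp (-(2 * t * jumpNum F ((i : ℕ) + 1))) * ‖b.repr f i‖ ^ 2))
      (rayNorm NV F t)
      ≤ dInfty NH NV + Real.log r := by
  classical
  -- the set defining the ray norm
  set RS : V → Set ℝ := fun f => {c : ℝ | ∃ (n : ℕ) (g : Fin n → V) (μ : Fin n → ℝ),
    (∀ i, g i ∈ F (μ i)) ∧ f = ∑ i, g i ∧
    c = ∑ i, Real.exp (-(t * μ i)) * NV (g i)} with hRS
  have hray_eq : ∀ f, rayNorm NV F t f = sInf (RS f) := fun f => rfl
  have hRSbdd : ∀ f, BddBelow (RS f) := by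
    intro f
    refine ⟨0, ?_⟩
    rintro c ⟨n, g, μ', _, _, rfl⟩
    exact Finset.sum_nonneg fun i _ => mul_nonneg (Real.exp_pos _).le (hNV.1 _)
  have hRSnonneg : ∀ f, ∀ c ∈ RS f, (0:ℝ) ≤ c := by
    rintro f c ⟨n, g, μ', _, _, rfl⟩
    exact Finset.sum_nonneg fun i _ => mul_nonneg (Real.exp_pos _).le (hNV.1 _)
  rcases Nat.eq_zero_or_pos r with hr0 | hrpos
  · -- degenerate case r = 0
    subst hr0
    haveI : Subsingleton V := Module.finrank_zero_iff.mp hr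
    have hray : ∀ v : V, rayNorm NV F t v = 0 := by
      intro v
      have hmem : (0:ℝ) ∈ RS v := by
        refine ⟨0, Fin.elim0, Fin.elim0, fun i => i.elim0, ?_, by simp⟩
        simp [Subsingleton.elim v 0]
      rw [hray_eq]
      exact le_antisymm (csInf_le (hRSbdd v) hmem) (le_csInf ⟨0, hmem⟩ (hRSnonneg v))
    have hD : 0 ≤ dInfty NH NV := Real.sInf_nonneg (fun x hx => hx.1)
    simp only [Nat.cast_zero, Real.log_zero, add_zero]
    simp only [dInfty]
    apply csInf_le ⟨0, fun x hx => hx.1⟩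
    refine ⟨hD, fun v => ?_⟩
    simp [hray v]
  · have hr1 : 1 ≤ r := hrpos
    -- the Euclidean model
    let φ : V ≃ₗ[ℂ] EuclideanSpace ℂ (Fin r) :=
      b.equivFun.trans (WithLp.linearEquiv 2 ℂ (Fin r → ℂ)).symm
    have hφ : ∀ (v : V) (i : Fin r), φ v i = b.repr v i := fun v i => rfl
    have hφnorm : ∀ v : V, ‖φ v‖ = Real.sqrt (∑ i, ‖b.repr v i‖ ^ 2) := by
      intro v
      simp only [EuclideanSpace.norm_eq, hφ]
    -- the inner product in coordinates
    have hp0 : ∀ w, p 0 w = 0 := by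
      intro w
      have h := hadd 0 0 w
      rw [add_zero] at h
      exact (left_eq_add.mp h)
    have hsumL : ∀ (s : Finset (Fin r)) (g : Fin r → V) (w : V),
        p (∑ i ∈ s, g i) w = ∑ i ∈ s, p (g i) w := by
      intro s
      induction s using Finset.cons_induction with
      | empty => intro g w; simpa using hp0 w
      | cons a s ha ih =>
        intro g w
        rw [Finset.sum_cons, Finset.sum_cons, hadd, ih]
    have hexp : ∀ (v w : V), p v w = ∑ i, b.repr v i * p (b i) w := by
      intro v w
      conv_lhs => rw [← b.sum_repr v]
      rw [hsumL]
      exact Finset.sum_congr rfl fun i _ => hsmul _ _ _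
    have hNHsum : ∀ v : V, NH v = Real.sqrt (∑ i, ‖b.repr v i‖ ^ 2) := by
      intro v
      have h1 : ∀ i, p (b i) v = (starRingEnd ℂ) (b.repr v i) := by
        intro i
        rw [hconj, hexp]
        congr 1
        rw [Finset.sum_congr rfl (fun j _ => by rw [horthonormal j i])]
        simp [Finset.sum_ite_eq']
      have hpvv : (p v v).re = ∑ i, ‖b.repr v i‖ ^ 2 := by
        rw [hexp v v]
        rw [Finset.sum_congr rfl (fun i _ => by rw [h1 i])]
        rw [Complex.re_sum]
        refine Finset.sum_congr rfl fun i _ => ?_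
        rw [Complex.mul_conj, Complex.normSq_eq_norm_sq, Complex.ofReal_re]
      rw [hNH, hpvv]
    have hNHeq : ∀ v : V, NH v = ‖φ v‖ := fun v => (hNHsum v).trans (hφnorm v).symm
    have hNHnonneg : ∀ v, 0 ≤ NH v := fun v => by rw [hNH]; exact Real.sqrt_nonneg _
    have hNHnorm : IsNorm NH := by
      refine ⟨hNHnonneg, fun v => ?_, fun c v => ?_, fun v w => ?_⟩
      · rw [hNHeq]
        constructor
        · intro h
          have h0 : φ v = 0 := by rwa [norm_eq_zero] at h
          exact (LinearEquiv.map_eq_zero_iff φ).mp h0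
        · rintro rfl; simp
      · rw [hNHeq, hNHeq, map_smul, norm_smul]
      · rw [hNHeq, hNHeq, hNHeq, map_add]; exact norm_add_le _ _
    -- comparability of NH and NV
    obtain ⟨KV, hKV0, hKV1, hKV2⟩ := normCompare φ NV hNV
    obtain ⟨KH, hKH0, hKH1, hKH2⟩ := normCompare φ NH hNHnorm
    have hSne : ∃ C : ℝ, 0 ≤ C ∧
        ∀ v, Real.exp (-C) * NV v ≤ NH v ∧ NH v ≤ Real.exp C * NV v := by
      refine ⟨Real.log (max (KH * KV) 1), Real.log_nonneg (le_max_right _ _), fun v => ?_⟩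
      have hM : Real.exp (Real.log (max (KH * KV) 1)) = max (KH * KV) 1 :=
        Real.exp_log (lt_of_lt_of_le one_pos (le_max_right _ _))
      have hup : NH v ≤ Real.exp (Real.log (max (KH * KV) 1)) * NV v := by
        rw [hM]
        calc NH v ≤ KH * ‖φ v‖ := hKH1 v
        _ ≤ KH * (KV * NV v) := mul_le_mul_of_nonneg_left (hKV2 v) hKH0.le
        _ = (KH * KV) * NV v := by ring
        _ ≤ max (KH * KV) 1 * NV v :=
            mul_le_mul_of_nonneg_right (le_max_left _ _) (hNV.1 v)
      have hdn : NV v ≤ Real.exp (Real.log (max (KH * KV) 1)) * NH v := by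
        rw [hM]
        calc NV v ≤ KV * ‖φ v‖ := hKV1 v
        _ ≤ KV * (KH * NH v) := mul_le_mul_of_nonneg_left (hKH2 v) hKV0.le
        _ = (KH * KV) * NH v := by ring
        _ ≤ max (KH * KV) 1 * NH v :=
            mul_le_mul_of_nonneg_right (le_max_left _ _) (hNHnonneg v)
      refine ⟨?_, hup⟩
      have hh := mul_le_mul_of_nonneg_left hdn (Real.exp_pos (-(Real.log (max (KH * KV) 1)))).le
      rw [← mul_assoc, ← Real.exp_add] at hh
      simpa using hh
    obtain ⟨hC0, hCv⟩ := dInfty_mem NH NV hNHnonneg hNV.1 hSne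
    set C := dInfty NH NV with hCdef
    -- the scaled coordinate map
    let T : V →ₗ[ℂ] EuclideanSpace ℂ (Fin r) :=
      { toFun := fun v => WithLp.toLp 2 fun i =>
          ((Real.exp (-(t * jumpNum F ((i : ℕ) + 1))) : ℝ) : ℂ) * b.repr v i
        map_add' := by intro u v; ext i; simp [mul_add]
        map_smul' := by intro c v; ext i; simp; ring }
    have hT : ∀ (v : V) (i : Fin r),
        T v i = ((Real.exp (-(t * jumpNum F ((i : ℕ) + 1))) : ℝ) : ℂ) * b.repr v i :=
      fun v i => rfl
    have hTnorm : ∀ v : V, ‖T v‖ = Real.sqrt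
        (∑ i : Fin r, Real.exp (-(2 * t * jumpNum F ((i : ℕ) + 1))) * ‖b.repr v i‖ ^ 2) := by
      intro v
      rw [EuclideanSpace.norm_eq]
      congr 1
      refine Finset.sum_congr rfl fun i _ => ?_
      rw [hT, norm_mul, mul_pow, Complex.norm_real, Real.norm_eq_abs,
        abs_of_nonneg (Real.exp_pos _).le, sq, ← Real.exp_add]
      ring_nf
    -- key pointwise estimate
    have key_g : ∀ (μ : ℝ) (g : V), g ∈ F μ → ‖T g‖ ≤ Real.exp (-(t * μ)) * NH g := by
      intro μ g hg
      rw [hTnorm, hNHsum]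
      have hsq : Real.exp (-(t * μ)) *
          Real.sqrt (∑ i, ‖b.repr g i‖ ^ 2) =
          Real.sqrt (∑ i, Real.exp (-(2 * t * μ)) * ‖b.repr g i‖ ^ 2) := by
        rw [← Finset.mul_sum, Real.sqrt_mul (Real.exp_pos _).le]
        congr 1
        have h2 : Real.exp (-(2 * t * μ)) = (Real.exp (-(t * μ))) ^ 2 := by
          rw [sq, ← Real.exp_add]; ring_nf
        rw [h2, Real.sqrt_sq (Real.exp_pos _).le]
      rw [hsq]
      apply Real.sqrt_le_sqrt
      apply Finset.sum_le_sum
      intro i _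
      by_cases hci : b.repr g i = 0
      · simp [hci]
      · have hμi : μ ≤ jumpNum F ((i : ℕ) + 1) := by
          by_contra hlt
          push_neg at hlt
          exact hci (repr_eq_zero hr F hF b hadapted hg hlt)
        apply mul_le_mul_of_nonneg_right _ (by positivity)
        apply Real.exp_le_exp.2
        nlinarith
    -- canonical decomposition
    have hRSmem : ∀ f : V,
        (∑ i : Fin r, Real.exp (-(t * jumpNum F ((i : ℕ) + 1))) * NV (b.repr f i • b i)) ∈ RS f := by
      intro f
      exact ⟨r, fun i => b.repr f i • b i, fun i => jumpNum F ((i : ℕ) + 1),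
        fun i => Submodule.smul_mem _ _ (hadapted i), (b.sum_repr f).symm, rfl⟩
    -- upper bound : ‖T f‖ ≤ e^C · rayNorm f
    have upper1 : ∀ f : V, ‖T f‖ ≤ Real.exp C * rayNorm NV F t f := by
      intro f
      have hlb : ∀ c ∈ RS f, Real.exp (-C) * ‖T f‖ ≤ c := by
        rintro c ⟨n, g, μ', hgF, hfe, rfl⟩
        have h1 : ‖T f‖ ≤ ∑ i, Real.exp (-(t * μ' i)) * NH (g i) := by
          calc ‖T f‖ = ‖∑ i, T (g i)‖ := by rw [hfe, map_sum]
          _ ≤ ∑ i, ‖T (g i)‖ := norm_sum_le _ _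
          _ ≤ ∑ i, Real.exp (-(t * μ' i)) * NH (g i) :=
              Finset.sum_le_sum fun i _ => key_g _ _ (hgF i)
        have h2 : ∑ i, Real.exp (-(t * μ' i)) * NH (g i) ≤
            Real.exp C * ∑ i, Real.exp (-(t * μ' i)) * NV (g i) := by
          rw [Finset.mul_sum]
          apply Finset.sum_le_sum
          intro i _
          calc Real.exp (-(t * μ' i)) * NH (g i)
              ≤ Real.exp (-(t * μ' i)) * (Real.exp C * NV (g i)) :=
                mul_le_mul_of_nonneg_left (hCv (g i)).2 (Real.exp_pos _).le
          _ = Real.exp C * (Real.exp (-(t * μ' i)) * NV (g i)) := by ring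
        have h3 : ‖T f‖ ≤ Real.exp C * (∑ i, Real.exp (-(t * μ' i)) * NV (g i)) :=
          le_trans h1 h2
        have hh := mul_le_mul_of_nonneg_left h3 (Real.exp_pos (-C)).le
        rw [← mul_assoc, ← Real.exp_add] at hh
        simpa using hh
      have h4 : Real.exp (-C) * ‖T f‖ ≤ rayNorm NV F t f := by
        rw [hray_eq]
        exact le_csInf ⟨_, hRSmem f⟩ hlb
      have hh := mul_le_mul_of_nonneg_left h4 (Real.exp_pos C).le
      rw [← mul_assoc, ← Real.exp_add] at hh
      simpa using hh
    -- lower bound : rayNorm f ≤ e^C · r · ‖T f‖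
    have upper2 : ∀ f : V, rayNorm NV F t f ≤ Real.exp C * r * ‖T f‖ := by
      intro f
      have h0 : rayNorm NV F t f ≤
          ∑ i : Fin r, Real.exp (-(t * jumpNum F ((i : ℕ) + 1))) * NV (b.repr f i • b i) := by
        rw [hray_eq]
        exact csInf_le (hRSbdd f) (hRSmem f)
      have hNHb : ∀ i, NH (b i) = 1 := by
        intro i
        rw [hNH, horthonormal i i]
        simp
      have h1 : ∀ i, NV (b.repr f i • b i) ≤ Real.exp C * ‖b.repr f i‖ := by
        intro i
        have h := (hCv (b.repr f i • b i)).1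
        have h' : NV (b.repr f i • b i) ≤ Real.exp C * NH (b.repr f i • b i) := by
          have hh := mul_le_mul_of_nonneg_left h (Real.exp_pos C).le
          rw [← mul_assoc, ← Real.exp_add] at hh
          simpa using hh
        rw [hNHnorm.2.2.1, hNHb i, mul_one] at h'
        exact h'
      have h2 : ∀ i : Fin r, Real.exp (-(t * jumpNum F ((i : ℕ) + 1))) * ‖b.repr f i‖
          ≤ ‖T f‖ := by
        intro i
        rw [hTnorm]
        have ha : 0 ≤ Real.exp (-(t * jumpNum F ((i : ℕ) + 1))) * ‖b.repr f i‖ := by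
          positivity
        rw [← Real.sqrt_sq ha]
        apply Real.sqrt_le_sqrt
        have heq : (Real.exp (-(t * jumpNum F ((i : ℕ) + 1))) * ‖b.repr f i‖) ^ 2
            = Real.exp (-(2 * t * jumpNum F ((i : ℕ) + 1))) * ‖b.repr f i‖ ^ 2 := by
          rw [mul_pow, sq (Real.exp _), ← Real.exp_add]
          ring_nf
        rw [heq]
        exact Finset.single_le_sum
          (f := fun j : Fin r => Real.exp (-(2 * t * jumpNum F ((j : ℕ) + 1))) *
            ‖b.repr f j‖ ^ 2)
          (fun j _ => by positivity) (Finset.mem_univ i)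
      calc rayNorm NV F t f
          ≤ ∑ i : Fin r, Real.exp (-(t * jumpNum F ((i : ℕ) + 1))) * NV (b.repr f i • b i) := h0
      _ ≤ ∑ i : Fin r, Real.exp C * (Real.exp (-(t * jumpNum F ((i : ℕ) + 1))) *
            ‖b.repr f i‖) := by
          apply Finset.sum_le_sum
          intro i _
          calc Real.exp (-(t * jumpNum F ((i : ℕ) + 1))) * NV (b.repr f i • b i)
              ≤ Real.exp (-(t * jumpNum F ((i : ℕ) + 1))) *
                  (Real.exp C * ‖b.repr f i‖) :=
                mul_le_mul_of_nonneg_left (h1 i) (Real.exp_pos _).le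
          _ = Real.exp C * (Real.exp (-(t * jumpNum F ((i : ℕ) + 1))) *
                ‖b.repr f i‖) := by ring
      _ = Real.exp C * ∑ i : Fin r, Real.exp (-(t * jumpNum F ((i : ℕ) + 1))) *
            ‖b.repr f i‖ := by rw [← Finset.mul_sum]
      _ ≤ Real.exp C * (r * ‖T f‖) := by
          apply mul_le_mul_of_nonneg_left _ (Real.exp_pos C).le
          have hs := Finset.sum_le_card_nsmul Finset.univ
            (fun i : Fin r => Real.exp (-(t * jumpNum F ((i : ℕ) + 1))) * ‖b.repr f i‖)
            ‖T f‖ (fun i _ => h2 i)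
          simpa [nsmul_eq_mul] using hs
      _ = Real.exp C * r * ‖T f‖ := by ring
    -- wrap up
    have hray_nonneg : ∀ f, 0 ≤ rayNorm NV F t f := fun f => by
      rw [hray_eq]
      exact Real.sInf_nonneg (hRSnonneg f)
    have hlogr : 0 ≤ Real.log r := Real.log_nonneg (by exact_mod_cast hr1)
    have hexpCr : Real.exp (C + Real.log r) = Real.exp C * r := by
      rw [Real.exp_add, Real.exp_log (by exact_mod_cast hrpos)]
    simp only [dInfty]
    apply csInf_le ⟨0, fun x hx => hx.1⟩
    refine ⟨add_nonneg hC0 hlogr, fun v => ⟨?_, ?_⟩⟩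
    · rw [← hTnorm v]
      have h := upper2 v
      have hh := mul_le_mul_of_nonneg_left h (Real.exp_pos (-(C + Real.log r))).le
      calc Real.exp (-(C + Real.log r)) * rayNorm NV F t v
          ≤ Real.exp (-(C + Real.log r)) * (Real.exp C * ↑r * ‖T v‖) := hh
      _ = Real.exp (-(C + Real.log r)) * (Real.exp (C + Real.log r) * ‖T v‖) := by
          rw [hexpCr]
      _ = ‖T v‖ := by
          rw [← mul_assoc, ← Real.exp_add,
            show -(C + Real.log (r:ℝ)) + (C + Real.log (r:ℝ)) = 0 by ring,
            Real.exp_zero, one_mul]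
    · rw [← hTnorm v]
      calc ‖T v‖ ≤ Real.exp C * rayNorm NV F t v := upper1 v
      _ ≤ Real.exp (C + Real.log r) * rayNorm NV F t v :=
          mul_le_mul_of_nonneg_right (Real.exp_le_exp.2 (by linarith)) (hray_nonneg v)
end

section
/- Let V be a finite-dimensional complex vector space, N_V a norm on V, and F a filtration of V. Then the ray of norms N^t_{V,F} satisfies the following semigroup property: for every t ≥ s ≥ 0 and every f ∈ V, ‖f‖^t_{V,F} = inf{Σ_i e^{−(t−s)μ_i}·‖f_i‖^s_{V,F} : f = Σ_i f_i is a finite decomposition with f_i ∈ F^{μ_i} V}. In other words, the ray construction applied to the norm N^s_{V,F} at time t−s yields N^t_{V,F}. -/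
open scoped BigOperators

/-- A (decreasing, left-continuous, exhaustive, bounded) filtration of a complex
vector space by subspaces. -/
def IsRealFiltration {V : Type*} [AddCommGroup V] [Module ℂ V]
    (F : ℝ → Submodule ℂ V) : Prop :=
  (∀ ⦃s t : ℝ⦄, s < t → F t ≤ F s) ∧
  (∀ t : ℝ, ∃ ε₀ > (0:ℝ), ∀ ε : ℝ, 0 < ε → ε < ε₀ → F (t - ε) = F t) ∧
  (∃ t₀ : ℝ, ∀ t ≤ t₀, F t = ⊤) ∧
  (∃ t₁ : ℝ, ∀ t : ℝ, t₁ ≤ t → F t = ⊥)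

namespace RayNormAux

variable {V : Type*} [AddCommGroup V] [Module ℂ V]

/-- The defining set of the ray norm. -/
def raySet (N : V → ℝ) (F : ℝ → Submodule ℂ V) (t : ℝ) (f : V) : Set ℝ :=
  {c : ℝ | ∃ (n : ℕ) (g : Fin n → V) (μ : Fin n → ℝ),
    (∀ i, g i ∈ F (μ i)) ∧ f = ∑ i, g i ∧
    c = ∑ i, Real.exp (-(t * μ i)) * N (g i)}

theorem rayNorm_eq (N : V → ℝ) (F : ℝ → Submodule ℂ V) (t : ℝ) (f : V) :
    rayNorm N F t f = sInf (raySet N F t f) := rfl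

theorem raySet_nonneg {N : V → ℝ} (hN : IsNorm N) (F : ℝ → Submodule ℂ V) (t : ℝ) (f : V) :
    ∀ c ∈ raySet N F t f, (0:ℝ) ≤ c := by
  rintro c ⟨n, g, μ, hg, hf, rfl⟩
  exact Finset.sum_nonneg fun i _ => mul_nonneg (Real.exp_nonneg _) (hN.1 _)

theorem raySet_bddBelow {N : V → ℝ} (hN : IsNorm N) (F : ℝ → Submodule ℂ V) (t : ℝ) (f : V) :
    BddBelow (raySet N F t f) :=
  ⟨0, fun c hc => raySet_nonneg hN F t f c hc⟩

theorem mem_raySet_of_fintype (N : V → ℝ) (F : ℝ → Submodule ℂ V) (t : ℝ)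
    {ι : Type} [Fintype ι] (g : ι → V) (μ : ι → ℝ) (hg : ∀ i, g i ∈ F (μ i)) :
    (∑ i, Real.exp (-(t * μ i)) * N (g i)) ∈ raySet N F t (∑ i, g i) := by
  classical
  obtain e := (Fintype.equivFin ι).symm
  refine ⟨Fintype.card ι, g ∘ e, μ ∘ e, fun i => hg _, ?_, ?_⟩
  · exact (Equiv.sum_comp e g).symm
  · exact (Equiv.sum_comp e (fun i => Real.exp (-(t * μ i)) * N (g i))).symm

theorem raySet_nonempty (N : V → ℝ) {F : ℝ → Submodule ℂ V} (hF : IsRealFiltration F)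
    (t : ℝ) (f : V) : (raySet N F t f).Nonempty := by
  obtain ⟨t₀, ht₀⟩ := hF.2.2.1
  refine ⟨Real.exp (-(t * t₀)) * N f, 1, fun _ => f, fun _ => t₀, fun i => ?_, by simp, by simp⟩
  rw [ht₀ t₀ le_rfl]; trivial

theorem rayNorm_nonneg {N : V → ℝ} (hN : IsNorm N) (F : ℝ → Submodule ℂ V) (t : ℝ) (f : V) :
    0 ≤ rayNorm N F t f :=
  Real.sInf_nonneg (raySet_nonneg hN F t f)

theorem rayNorm_zero {N : V → ℝ} (hN : IsNorm N) (F : ℝ → Submodule ℂ V) (t : ℝ) :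
    rayNorm N F t (0:V) = 0 := by
  refine le_antisymm ?_ (rayNorm_nonneg hN F t 0)
  have h0 : (0:ℝ) ∈ raySet N F t (0:V) :=
    ⟨0, fun i => 0, fun i => 0, fun i => i.elim0, by simp, by simp⟩
  exact csInf_le (raySet_bddBelow hN F t 0) h0

theorem rayNorm_add_le {N : V → ℝ} (hN : IsNorm N) {F : ℝ → Submodule ℂ V}
    (hF : IsRealFiltration F) (t : ℝ) (u v : V) :
    rayNorm N F t (u + v) ≤ rayNorm N F t u + rayNorm N F t v := by
  refine le_of_forall_pos_le_add fun ε hε => ?_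
  obtain ⟨a, ha, halt⟩ := Real.lt_sInf_add_pos (raySet_nonempty N hF t u) (half_pos hε)
  obtain ⟨b, hb, hblt⟩ := Real.lt_sInf_add_pos (raySet_nonempty N hF t v) (half_pos hε)
  obtain ⟨m, g, μ, hg, hu, rfl⟩ := ha
  obtain ⟨k, h, ν, hh, hv, rfl⟩ := hb
  have key := mem_raySet_of_fintype N F t (Sum.elim g h) (Sum.elim μ ν)
    (fun i => by cases i with
      | inl i => exact hg i
      | inr j => exact hh j)
  rw [Fintype.sum_sum_type, Fintype.sum_sum_type] at key
  simp only [Sum.elim_inl, Sum.elim_inr] at key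
  have hle : rayNorm N F t (u + v) ≤
      (∑ i, Real.exp (-(t * μ i)) * N (g i)) + ∑ j, Real.exp (-(t * ν j)) * N (h j) := by
    rw [rayNorm_eq]
    have : u + v = (∑ i, g i) + ∑ j, h j := by rw [hu, hv]
    rw [this]
    exact csInf_le (raySet_bddBelow hN F t _) key
  simp only [rayNorm_eq] at hle ⊢
  linarith

theorem rayNorm_sum_le {N : V → ℝ} (hN : IsNorm N) {F : ℝ → Submodule ℂ V}
    (hF : IsRealFiltration F) (t : ℝ) {n : ℕ} (g : Fin n → V) :
    rayNorm N F t (∑ i, g i) ≤ ∑ i, rayNorm N F t (g i) :=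
  Finset.le_sum_of_subadditive (rayNorm N F t) (rayNorm_zero hN F t).le
    (rayNorm_add_le hN hF t) Finset.univ g

theorem F_antitone {F : ℝ → Submodule ℂ V} (hF : IsRealFiltration F)
    {a b : ℝ} (hab : a ≤ b) : F b ≤ F a := by
  rcases hab.lt_or_eq with h | h
  · exact hF.1 h
  · rw [h]

theorem norm_zero {N : V → ℝ} (hN : IsNorm N) : N 0 = 0 := (hN.2.1 0).mpr rfl

theorem norm_sum_le {N : V → ℝ} (hN : IsNorm N) {ι : Type*} (s : Finset ι) (f : ι → V) :
    N (∑ i ∈ s, f i) ≤ ∑ i ∈ s, N (f i) :=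
  Finset.le_sum_of_subadditive N (norm_zero hN).le hN.2.2.2 s f

/-- Key regularization lemma: for `g ∈ F μ` and `0 ≤ s ≤ t`,
`rayNorm N F t g ≤ exp (-(t-s)μ) * rayNorm N F s g`. -/
theorem rayNorm_le_exp_mul {N : V → ℝ} (hN : IsNorm N) {F : ℝ → Submodule ℂ V}
    (hF : IsRealFiltration F) {t s : ℝ} (hs : 0 ≤ s) (hst : s ≤ t)
    {g : V} {μ : ℝ} (hg : g ∈ F μ) :
    rayNorm N F t g ≤ Real.exp (-((t - s) * μ)) * rayNorm N F s g := by
  classical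
  set E : ℝ := Real.exp (-((t - s) * μ)) with hE
  have hEpos : 0 < E := Real.exp_pos _
  rw [rayNorm_eq N F s g]
  rw [show E * sInf (raySet N F s g) = sInf (raySet N F s g) * E from mul_comm _ _,
    ← div_le_iff₀ hEpos]
  refine le_csInf (raySet_nonempty N hF s g) ?_
  rintro x ⟨m, h, ν, hh, hgsum, rfl⟩
  rw [div_le_iff₀ hEpos, mul_comm _ E]
  -- build the new decomposition indexed by Option (Fin m)
  set G : Option (Fin m) → V := fun o => Option.rec
    (g - ∑ j, (if μ ≤ ν j then h j else 0)) (fun j => if μ ≤ ν j then h j else 0) o with hG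
  set Λ : Option (Fin m) → ℝ := fun o => Option.rec μ (fun j => max μ (ν j)) o with hΛ
  have hGmem : ∀ o, G o ∈ F (Λ o) := by
    rintro (_ | j)
    · -- none
      refine Submodule.sub_mem _ hg (Submodule.sum_mem _ fun j _ => ?_)
      by_cases hj : μ ≤ ν j
      · simp only [hG, hj, if_true]
        exact F_antitone hF hj (hh j)
      · simp only [hG, hj, if_false]
        exact Submodule.zero_mem _
    · by_cases hj : μ ≤ ν j
      · simp only [hG, hΛ, hj, if_true, max_eq_right hj]
        exact hh j
      · simp only [hG, hj, if_false]
        exact Submodule.zero_mem _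
  have hsum : g = ∑ o : Option (Fin m), G o := by
    rw [Fintype.sum_option]
    simp only [hG]
    abel
  have key := mem_raySet_of_fintype N F t G Λ hGmem
  rw [← hsum] at key
  have hle : rayNorm N F t g ≤ ∑ o : Option (Fin m), Real.exp (-(t * Λ o)) * N (G o) :=
    csInf_le (raySet_bddBelow hN F t g) key
  refine hle.trans ?_
  rw [Fintype.sum_option]
  -- rewrite the `none` term
  have hnone : G none = ∑ j, (if μ ≤ ν j then 0 else h j) := by
    simp only [hG]
    rw [hgsum, ← Finset.sum_sub_distrib]
    refine Finset.sum_congr rfl fun j _ => ?_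
    by_cases hj : μ ≤ ν j <;> simp [hj]
  have hNnone : N (G none) ≤ ∑ j, N (if μ ≤ ν j then 0 else h j) := by
    rw [hnone]; exact norm_sum_le hN _ _
  have step1 : Real.exp (-(t * Λ none)) * N (G none) +
      ∑ j, Real.exp (-(t * Λ (some j))) * N (G (some j)) ≤
      ∑ j, (Real.exp (-(t * μ)) * N (if μ ≤ ν j then 0 else h j) +
        Real.exp (-(t * max μ (ν j))) * N (if μ ≤ ν j then h j else 0)) := by
    rw [Finset.sum_add_distrib]
    have h1 : Real.exp (-(t * Λ none)) * N (G none) ≤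
        ∑ j, Real.exp (-(t * μ)) * N (if μ ≤ ν j then 0 else h j) := by
      have : Λ none = μ := rfl
      rw [this, ← Finset.mul_sum]
      exact mul_le_mul_of_nonneg_left hNnone (Real.exp_nonneg _)
    have h2 : ∑ j, Real.exp (-(t * Λ (some j))) * N (G (some j)) =
        ∑ j, Real.exp (-(t * max μ (ν j))) * N (if μ ≤ ν j then h j else 0) := rfl
    rw [h2]
    linarith
  refine step1.trans ?_
  rw [Finset.mul_sum]
  refine Finset.sum_le_sum fun j _ => ?_
  have hNj : 0 ≤ N (h j) := hN.1 _
  have hexp : E * (Real.exp (-(s * ν j)) * N (h j)) =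
      Real.exp (-((t - s) * μ) + -(s * ν j)) * N (h j) := by
    rw [Real.exp_add, hE, mul_assoc]
  rw [hexp]
  by_cases hj : μ ≤ ν j
  · simp only [hj, if_true, norm_zero hN, mul_zero, zero_add, max_eq_right hj]
    refine mul_le_mul_of_nonneg_right (Real.exp_le_exp.mpr ?_) hNj
    nlinarith [mul_le_mul_of_nonneg_left hj (sub_nonneg.mpr hst)]
  · simp only [hj, if_false, norm_zero hN, mul_zero, add_zero]
    have hj' : ν j ≤ μ := le_of_not_ge hj
    refine mul_le_mul_of_nonneg_right (Real.exp_le_exp.mpr ?_) hNj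
    nlinarith [mul_le_mul_of_nonneg_left hj' hs]

theorem rayNorm_le_single {N : V → ℝ} (hN : IsNorm N) {F : ℝ → Submodule ℂ V}
    (hF : IsRealFiltration F) (s : ℝ) {g : V} {μ : ℝ} (hg : g ∈ F μ) :
    rayNorm N F s g ≤ Real.exp (-(s * μ)) * N g := by
  have hmem : Real.exp (-(s * μ)) * N g ∈ raySet N F s g := by
    refine ⟨1, fun _ => g, fun _ => μ, fun _ => hg, by simp, by simp⟩
  exact csInf_le (raySet_bddBelow hN F s g) hmem

end RayNormAux

/-- Semigroup property of the ray of norms: for `t ≥ s ≥ 0`, the ray construction applied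
to `N^s_{V,F}` at time `t - s` yields `N^t_{V,F}`. -/
theorem rayNorm_semigroup
    {V : Type*} [AddCommGroup V] [Module ℂ V] [FiniteDimensional ℂ V]
    (N : V → ℝ) (hN : IsNorm N) (F : ℝ → Submodule ℂ V) (hF : IsRealFiltration F)
    (t s : ℝ) (hs : 0 ≤ s) (hst : s ≤ t) (f : V) :
    rayNorm N F t f =
      sInf {c : ℝ | ∃ (n : ℕ) (g : Fin n → V) (μ : Fin n → ℝ),
        (∀ i, g i ∈ F (μ i)) ∧ f = ∑ i, g i ∧
        c = ∑ i, Real.exp (-((t - s) * μ i)) * rayNorm N F s (g i)} := by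
  classical
  open RayNormAux in
  set T : Set ℝ := {c : ℝ | ∃ (n : ℕ) (g : Fin n → V) (μ : Fin n → ℝ),
    (∀ i, g i ∈ F (μ i)) ∧ f = ∑ i, g i ∧
    c = ∑ i, Real.exp (-((t - s) * μ i)) * rayNorm N F s (g i)} with hT
  have hTne : T.Nonempty := by
    obtain ⟨t₀, ht₀⟩ := hF.2.2.1
    refine ⟨Real.exp (-((t - s) * t₀)) * rayNorm N F s f,
      1, fun _ => f, fun _ => t₀, fun i => ?_, by simp, by simp⟩
    rw [ht₀ t₀ le_rfl]; trivial
  have hTbdd : BddBelow T := by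
    refine ⟨0, ?_⟩
    rintro c ⟨n, g, μ, hg, hfsum, rfl⟩
    exact Finset.sum_nonneg fun i _ =>
      mul_nonneg (Real.exp_nonneg _) (RayNormAux.rayNorm_nonneg hN F s (g i))
  refine le_antisymm ?_ ?_
  · -- rayNorm t f ≤ sInf T
    refine le_csInf hTne ?_
    rintro b ⟨n, g, μ, hg, hfsum, rfl⟩
    calc rayNorm N F t f = rayNorm N F t (∑ i, g i) := by rw [hfsum]
      _ ≤ ∑ i, rayNorm N F t (g i) := RayNormAux.rayNorm_sum_le hN hF t g
      _ ≤ ∑ i, Real.exp (-((t - s) * μ i)) * rayNorm N F s (g i) :=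
          Finset.sum_le_sum fun i _ =>
            RayNormAux.rayNorm_le_exp_mul hN hF hs hst (hg i)
  · -- sInf T ≤ rayNorm t f
    rw [RayNormAux.rayNorm_eq]
    refine le_csInf (RayNormAux.raySet_nonempty N hF t f) ?_
    rintro a ⟨n, g, μ, hg, hfsum, rfl⟩
    have hmemT : (∑ i, Real.exp (-((t - s) * μ i)) * rayNorm N F s (g i)) ∈ T :=
      ⟨n, g, μ, hg, hfsum, rfl⟩
    refine (csInf_le hTbdd hmemT).trans (Finset.sum_le_sum fun i _ => ?_)
    have h1 : rayNorm N F s (g i) ≤ Real.exp (-(s * μ i)) * N (g i) :=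
      RayNormAux.rayNorm_le_single hN hF s (hg i)
    calc Real.exp (-((t - s) * μ i)) * rayNorm N F s (g i)
        ≤ Real.exp (-((t - s) * μ i)) * (Real.exp (-(s * μ i)) * N (g i)) :=
          mul_le_mul_of_nonneg_left h1 (Real.exp_nonneg _)
      _ = Real.exp (-(t * μ i)) * N (g i) := by
          rw [← mul_assoc, ← Real.exp_add]
          ring_nf
end

section
/- Let P = X³Y − XY³ ∈ ℝ[X,Y]. Then for every k ≥ 1: (i) sup{|P(x,y)^k| : x, y ∈ [−1,1]} = (2√3/9)^k, and (ii) the sum of the absolute values of the coefficients of the polynomial P^k equals 2^k. In particular, the sum of absolute values of the coefficients of P^k is exponentially larger than the sup of |P^k| on the unit box, so the asymptotic equivalence of the projective symmetric norm and the evaluation sup-norm fails over the real numbers. -/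
open scoped BigOperators
open MvPolynomial Finset

/-- The real polynomial `P = X³Y − XY³`. -/
noncomputable def Pxy : MvPolynomial (Fin 2) ℝ :=
  X 0 ^ 3 * X 1 - X 0 * X 1 ^ 3

private theorem keyineq (u v : ℝ) (hu0 : 0 ≤ u) (hu1 : u ≤ 1) (hv0 : 0 ≤ v) (hv1 : v ≤ 1) :
    u*v*(u-v)^2 ≤ 4/27 := by
  rcases le_total v u with h | h
  · have h1 : u*v*(u-v)^2 ≤ v*(u-v)^2 := by nlinarith [mul_nonneg hv0 (sq_nonneg (u-v))]
    have h2 : v*(u-v)^2 ≤ v*(1-v)^2 :=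
      mul_le_mul_of_nonneg_left (by nlinarith) hv0
    nlinarith [mul_nonneg (sq_nonneg (v-1/3)) (by linarith : (0:ℝ) ≤ 4/3 - v)]
  · have h1 : u*v*(u-v)^2 ≤ u*(u-v)^2 := by nlinarith [mul_nonneg hu0 (sq_nonneg (u-v))]
    have h2 : u*(u-v)^2 ≤ u*(1-u)^2 :=
      mul_le_mul_of_nonneg_left (by nlinarith) hu0
    nlinarith [mul_nonneg (sq_nonneg (u-1/3)) (by linarith : (0:ℝ) ≤ 4/3 - u)]

private theorem abs_eval_le (x y : ℝ) (hx : |x| ≤ 1) (hy : |y| ≤ 1) :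
    |x^3*y - x*y^3| ≤ 2 * Real.sqrt 3 / 9 := by
  have hx2 : x^2 ≤ 1 := by nlinarith [abs_nonneg x, sq_abs x]
  have hy2 : y^2 ≤ 1 := by nlinarith [abs_nonneg y, sq_abs y]
  have h3 : Real.sqrt 3 ^ 2 = 3 := Real.sq_sqrt (by norm_num)
  have hs : (2 * Real.sqrt 3 / 9)^2 = 4/27 := by
    rw [div_pow, mul_pow, h3]; norm_num
  have hp : (x^3*y - x*y^3)^2 ≤ (2 * Real.sqrt 3 / 9)^2 := by
    rw [hs]
    have := keyineq (x^2) (y^2) (sq_nonneg x) hx2 (sq_nonneg y) hy2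
    nlinarith [this]
  calc |x^3*y - x*y^3| = Real.sqrt ((x^3*y - x*y^3)^2) := (Real.sqrt_sq_eq_abs _).symm
    _ ≤ Real.sqrt ((2 * Real.sqrt 3 / 9)^2) := Real.sqrt_le_sqrt hp
    _ = |2 * Real.sqrt 3 / 9| := Real.sqrt_sq_eq_abs _
    _ = 2 * Real.sqrt 3 / 9 := abs_of_nonneg (by positivity)

/-- exponent of the i-th monomial of `Pxy ^ k` -/
private noncomputable def e (k i : ℕ) : Fin 2 →₀ ℕ :=
  Finsupp.single 0 (k + 2*i) + Finsupp.single 1 (3*k - 2*i)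

private theorem e_inj (k : ℕ) : Function.Injective (e k) := by
  intro i j h
  have : (e k i) 0 = (e k j) 0 := by rw [h]
  simp [e, Finsupp.single_apply] at this
  omega

private theorem rep (k : ℕ) : Pxy ^ k =
    ∑ i ∈ range (k+1), monomial (e k i) ((-1:ℝ)^(i+k) * (k.choose i : ℝ)) := by
  rw [Pxy, sub_pow]
  refine Finset.sum_congr rfl fun i hi => ?_
  rw [mem_range] at hi
  have h1 : (X 0 ^ 3 * X 1 : MvPolynomial (Fin 2) ℝ) ^ i * (X 0 * X 1 ^ 3) ^ (k - i)
      = monomial (e k i) 1 := by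
    have : (X 0 ^ 3 * X 1 : MvPolynomial (Fin 2) ℝ) ^ i * (X 0 * X 1 ^ 3) ^ (k - i)
        = X 0 ^ (3*i + (k-i)) * X 1 ^ (i + 3*(k-i)) := by ring
    rw [this, X_pow_eq_monomial, X_pow_eq_monomial, monomial_mul, mul_one, e,
      show 3*i + (k-i) = k + 2*i by omega, show i + 3*(k-i) = 3*k - 2*i by omega]
  calc (-1:MvPolynomial (Fin 2) ℝ) ^ (i+k) * (X 0 ^ 3 * X 1) ^ i * (X 0 * X 1 ^ 3) ^ (k - i)
        * (k.choose i : MvPolynomial (Fin 2) ℝ)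
      = C ((-1:ℝ)^(i+k) * (k.choose i : ℝ)) *
        ((X 0 ^ 3 * X 1) ^ i * (X 0 * X 1 ^ 3) ^ (k - i)) := by
        push_cast
        simp [map_mul, map_pow, map_neg, map_one, map_natCast]
        ring
    _ = monomial (e k i) ((-1:ℝ)^(i+k) * (k.choose i : ℝ)) := by
        rw [h1, C_mul_monomial, mul_one]

private theorem coeff_rep (k j : ℕ) (hj : j ∈ range (k+1)) :
    (Pxy ^ k).coeff (e k j) = (-1:ℝ)^(j+k) * (k.choose j : ℝ) := by
  rw [rep]
  rw [MvPolynomial.coeff_sum]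
  rw [Finset.sum_eq_single j]
  · simp [coeff_monomial]
  · intro i hi hij
    rw [coeff_monomial, if_neg (fun h => hij (e_inj k h))]
  · intro h; exact absurd hj h

private theorem support_rep (k : ℕ) : (Pxy ^ k).support = (range (k+1)).image (e k) := by
  apply Finset.Subset.antisymm
  · intro α hα
    rw [MvPolynomial.mem_support_iff] at hα
    by_contra hc
    apply hα
    rw [rep, MvPolynomial.coeff_sum]
    refine Finset.sum_eq_zero fun i hi => ?_
    rw [coeff_monomial, if_neg]
    intro h
    exact hc (Finset.mem_image.2 ⟨i, hi, h⟩)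
  · intro α hα
    rcases Finset.mem_image.1 hα with ⟨i, hi, rfl⟩
    rw [MvPolynomial.mem_support_iff, coeff_rep k i hi]
    have : (k.choose i : ℝ) ≠ 0 := by
      rw [mem_range] at hi
      exact_mod_cast (Nat.choose_pos (show i ≤ k by omega)).ne'
    intro h
    rcases mul_eq_zero.1 h with h' | h'
    · exact absurd h' (by positivity)
    · exact this h'

/-- Failure of the asymptotic equivalence over the reals: for `P = X³Y − XY³` and every
`k ≥ 1`, the sup of `|P^k|` on the unit box `[-1,1]²` equals `(2√3/9)^k`, while the sum of
the absolute values of the coefficients of `P^k` equals `2^k`. -/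
theorem real_counterexample (k : ℕ) (hk : 1 ≤ k) :
    sSup {v : ℝ | ∃ x y : ℝ, |x| ≤ 1 ∧ |y| ≤ 1 ∧
        v = |MvPolynomial.eval ![x, y] (Pxy ^ k)|} = (2 * Real.sqrt 3 / 9) ^ k ∧
    ∑ α ∈ (Pxy ^ k).support, |(Pxy ^ k).coeff α| = 2 ^ k := by
  constructor
  · have heval : ∀ x y : ℝ, MvPolynomial.eval ![x, y] Pxy = x^3*y - x*y^3 := by
      intro x y; simp [Pxy]
    apply IsGreatest.csSup_eq
    constructor
    · refine ⟨Real.sqrt 3 / 3, 1, ?_, by norm_num, ?_⟩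
      · rw [abs_of_nonneg (by positivity)]
        nlinarith [Real.sq_sqrt (by norm_num : (0:ℝ) ≤ 3), Real.sqrt_nonneg 3]
      · rw [map_pow, abs_pow, heval]
        congr 1
        have h3 : Real.sqrt 3 ^ 2 = 3 := Real.sq_sqrt (by norm_num)
        have : (Real.sqrt 3 / 3)^3 * 1 - (Real.sqrt 3/3) * 1^3 = -(2 * Real.sqrt 3 / 9) := by
          linear_combination (Real.sqrt 3 / 27) * h3
        rw [this, abs_neg, abs_of_nonneg (by positivity)]
    · rintro v ⟨x, y, hx, hy, rfl⟩
      rw [map_pow, abs_pow]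
      exact pow_le_pow_left₀ (abs_nonneg _) (by rw [heval]; exact abs_eval_le x y hx hy) k
  · rw [support_rep]
    rw [Finset.sum_image (fun i hi j hj h => e_inj k h)]
    have : ∀ i ∈ range (k+1), |(Pxy ^ k).coeff (e k i)| = (k.choose i : ℝ) := by
      intro i hi
      rw [coeff_rep k i hi, abs_mul, abs_pow, abs_neg, abs_one, one_pow, one_mul,
        abs_of_nonneg (by positivity)]
    rw [Finset.sum_congr rfl this]
    rw [← Nat.cast_sum]
    rw [Nat.sum_range_choose]
    push_cast
    ring
end

section
/- Let V be a finite-dimensional complex vector space with dim V = r and let N₁, N₂, N₃ be norms on V. Then for every j = 1,…,r: λ_j(N₁,N₂) + λ_r(N₂,N₃) ≤ λ_j(N₁,N₃) ≤ λ_j(N₁,N₂) + λ₁(N₂,N₃). -/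
open scoped BigOperators

/-!
Write `f₁₂ w = log (N₂ w / N₁ w)` etc., so that `f₁₃ = f₁₂ + f₂₃` off `0`. Since `f₂₃` lies
between `λ_r(N₂,N₃)` (its infimum over `V ∖ {0}`) and `λ₁(N₂,N₃)` (its supremum, as `f₂₃` is
constant on lines), both inequalities follow from monotonicity of the sup-inf `λ_j` in the
function, shifted by a constant. Equivalence of norms in finite dimension keeps all the `f`'s
bounded, so that no `sSup`/`sInf` takes its junk value.
-/

open Set

section Minimax

variable {K V : Type*} [Field K] [AddCommGroup V] [Module K V] {f g : V → ℝ}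

noncomputable def infOnNonzero (f : V → ℝ) (W : Submodule K V) : ℝ :=
  sInf {y : ℝ | ∃ w : V, w ∈ W ∧ w ≠ 0 ∧ y = f w}

-- `relSpec N₁ N₂` is definitionally `minimax ℂ (fun w => Real.log (N₂ w / N₁ w))`.
variable (K) in
noncomputable def minimax (f : V → ℝ) (j : ℕ) : ℝ :=
  sSup {x : ℝ | ∃ W : Submodule K V, Module.finrank K W = j ∧ x = infOnNonzero f W}

theorem Submodule.ne_bot_of_one_le_finrank {W : Submodule K V} (h : 1 ≤ Module.finrank K W) :
    W ≠ ⊥ := by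
  rintro rfl
  simp at h

theorem infOnNonzero_le (hf : BddBelow (range f)) {W : Submodule K V} {w : V} (hw : w ∈ W)
    (hw0 : w ≠ 0) : infOnNonzero f W ≤ f w := by
  obtain ⟨B, hB⟩ := hf
  exact csInf_le ⟨B, by rintro _ ⟨u, -, -, rfl⟩; exact hB (mem_range_self u)⟩ ⟨w, hw, hw0, rfl⟩

theorem le_infOnNonzero {W : Submodule K V} (hW : W ≠ ⊥) {c : ℝ}
    (h : ∀ w ∈ W, w ≠ 0 → c ≤ f w) : c ≤ infOnNonzero f W := by
  obtain ⟨w, hw, hw0⟩ := Submodule.exists_mem_ne_zero_of_ne_bot hW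
  exact le_csInf ⟨f w, w, hw, hw0, rfl⟩ (by rintro _ ⟨u, hu, hu0, rfl⟩; exact h u hu hu0)

theorem infOnNonzero_le_minimax (hf : BddBelow (range f)) (hf' : BddAbove (range f)) {j : ℕ}
    (hj : 1 ≤ j) {W : Submodule K V} (hW : Module.finrank K W = j) :
    infOnNonzero f W ≤ minimax K f j := by
  obtain ⟨B, hB⟩ := hf'
  refine le_csSup ⟨B, ?_⟩ ⟨W, hW, rfl⟩
  rintro _ ⟨W', hW', rfl⟩
  obtain ⟨w, hw, hw0⟩ := Submodule.exists_mem_ne_zero_of_ne_bot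
    (Submodule.ne_bot_of_one_le_finrank (hW' ▸ hj))
  exact (infOnNonzero_le hf hw hw0).trans (hB (mem_range_self w))

theorem minimax_le {j : ℕ} (hj : j ≤ Module.finrank K V) {c : ℝ}
    (h : ∀ W : Submodule K V, Module.finrank K W = j → infOnNonzero f W ≤ c) :
    minimax K f j ≤ c := by
  obtain ⟨b, hb⟩ := exists_linearIndependent_of_le_finrank hj
  refine csSup_le ⟨_, Submodule.span K (range b), ?_, rfl⟩ ?_
  · rw [finrank_span_eq_card hb, Fintype.card_fin]
  · rintro _ ⟨W, hW, rfl⟩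
    exact h W hW

theorem minimax_le_minimax_add (hf : BddBelow (range f)) (hg : BddBelow (range g))
    (hg' : BddAbove (range g)) {j : ℕ} (hj₁ : 1 ≤ j) (hj₂ : j ≤ Module.finrank K V) {c : ℝ}
    (hfg : ∀ w, w ≠ 0 → f w ≤ g w + c) : minimax K f j ≤ minimax K g j + c := by
  refine minimax_le hj₂ fun W hW => ?_
  calc infOnNonzero f W
      ≤ infOnNonzero g W + c := by
        rw [← sub_le_iff_le_add]
        refine le_infOnNonzero (Submodule.ne_bot_of_one_le_finrank (hW ▸ hj₁)) fun w hw hw0 => ?_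
        linarith [infOnNonzero_le hf hw hw0, hfg w hw0]
    _ ≤ minimax K g j + c := by gcongr; exact infOnNonzero_le_minimax hg hg' hj₁ hW

theorem minimax_finrank_le [FiniteDimensional K V] (hf : BddBelow (range f)) {w : V}
    (hw : w ≠ 0) : minimax K f (Module.finrank K V) ≤ f w :=
  minimax_le le_rfl fun W hW => by
    rw [Submodule.eq_top_of_finrank_eq hW]
    exact infOnNonzero_le hf Submodule.mem_top hw

theorem le_minimax_one (hf : BddBelow (range f)) (hf' : BddAbove (range f))
    (hsmul : ∀ c : K, c ≠ 0 → ∀ w, f (c • w) = f w) {w : V} (hw : w ≠ 0) :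
    f w ≤ minimax K f 1 := by
  refine le_trans ?_ (infOnNonzero_le_minimax hf hf' le_rfl (finrank_span_singleton hw))
  refine le_infOnNonzero (by simpa using hw) fun u hu hu0 => ?_
  obtain ⟨c, rfl⟩ := Submodule.mem_span_singleton.1 hu
  rw [hsmul c (by rintro rfl; simp at hu0)]

end Minimax

-- A type synonym, so that the identity `V → NormCopy V` compares two norms on `V`.
def NormCopy (V : Type*) := V

instance {V : Type*} [AddCommGroup V] : AddCommGroup (NormCopy V) :=
  inferInstanceAs (AddCommGroup V)
instance {V : Type*} [AddCommGroup V] [Module ℂ V] : Module ℂ (NormCopy V) :=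
  inferInstanceAs (Module ℂ V)

namespace IsNorm

variable {V : Type*} [AddCommGroup V] [Module ℂ V] {N M : V → ℝ}

theorem pos (h : IsNorm N) {v : V} (hv : v ≠ 0) : 0 < N v :=
  (h.1 v).lt_of_ne fun h0 => hv ((h.2.1 v).1 h0.symm)

@[reducible] noncomputable def toNormedAddCommGroup (h : IsNorm N) : NormedAddCommGroup V :=
  AddGroupNorm.toNormedAddCommGroup
    { toFun := N
      map_zero' := (h.2.1 0).2 rfl
      add_le' := h.2.2.2
      neg' := fun v => by simpa using h.2.2.1 (-1) v
      eq_zero_of_map_eq_zero' := fun v => (h.2.1 v).1 }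

@[reducible] noncomputable def toNormedSpace (h : IsNorm N) :
    @NormedSpace ℂ V _ h.toNormedAddCommGroup.toSeminormedAddCommGroup :=
  @NormedSpace.mk ℂ V _ h.toNormedAddCommGroup.toSeminormedAddCommGroup _
    fun c v => (h.2.2.1 c v).le

theorem exists_le_mul [FiniteDimensional ℂ V] (hN : IsNorm N) (hM : IsNorm M) :
    ∃ C, 0 ≤ C ∧ ∀ v, M v ≤ C * N v := by
  have hM' : IsNorm (V := NormCopy V) M := hM
  let _ := hN.toNormedAddCommGroup
  let _ := hN.toNormedSpace
  let _ := hM'.toNormedAddCommGroup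
  let _ := hM'.toNormedSpace
  let id : V →L[ℂ] NormCopy V := LinearMap.toContinuousLinearMap LinearMap.id
  exact ⟨‖id‖, norm_nonneg _, id.le_opNorm⟩

theorem bddAbove_range_log_div [FiniteDimensional ℂ V] (hN : IsNorm N) (hM : IsNorm M) :
    BddAbove (range fun w => Real.log (M w / N w)) := by
  obtain ⟨C, hC, hMN⟩ := hN.exists_le_mul hM
  refine ⟨C, forall_mem_range.2 fun w => ?_⟩
  have hdiv : 0 ≤ M w / N w := div_nonneg (hM.1 w) (hN.1 w)
  exact (Real.log_le_self hdiv).trans (div_le_of_le_mul₀ (hN.1 w) hC (hMN w))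

theorem bddBelow_range_log_div [FiniteDimensional ℂ V] (hN : IsNorm N) (hM : IsNorm M) :
    BddBelow (range fun w => Real.log (M w / N w)) := by
  obtain ⟨C, hC⟩ := hM.bddAbove_range_log_div hN
  refine ⟨-C, forall_mem_range.2 fun w => ?_⟩
  rw [← inv_div, Real.log_inv, neg_le_neg_iff]
  exact hC (mem_range_self w)

theorem log_div_smul (hN : IsNorm N) (hM : IsNorm M) {c : ℂ} (hc : c ≠ 0) (w : V) :
    Real.log (M (c • w) / N (c • w)) = Real.log (M w / N w) := by
  rw [hM.2.2.1, hN.2.2.1, mul_div_mul_left _ _ (norm_ne_zero_iff.2 hc)]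

theorem log_div_add_log_div {N₁ N₂ N₃ : V → ℝ} (h1 : IsNorm N₁) (h2 : IsNorm N₂)
    (h3 : IsNorm N₃) {w : V} (hw : w ≠ 0) :
    Real.log (N₂ w / N₁ w) + Real.log (N₃ w / N₂ w) = Real.log (N₃ w / N₁ w) := by
  rw [Real.log_div (h2.pos hw).ne' (h1.pos hw).ne', Real.log_div (h3.pos hw).ne' (h2.pos hw).ne',
    Real.log_div (h3.pos hw).ne' (h1.pos hw).ne']
  ring

end IsNorm

/-- Subadditivity-type estimates for the logarithmic relative spectrum: for any three
norms `N₁, N₂, N₃` on an `r`-dimensional complex vector space and `j = 1,…,r`,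
`λ_j(N₁,N₂) + λ_r(N₂,N₃) ≤ λ_j(N₁,N₃) ≤ λ_j(N₁,N₂) + λ₁(N₂,N₃)`. -/
theorem relSpec_triangle
    {V : Type*} [AddCommGroup V] [Module ℂ V] [FiniteDimensional ℂ V]
    (N₁ N₂ N₃ : V → ℝ) (h1 : IsNorm N₁) (h2 : IsNorm N₂) (h3 : IsNorm N₃)
    (j : ℕ) (hj1 : 1 ≤ j) (hj2 : j ≤ Module.finrank ℂ V) :
    relSpec N₁ N₂ j + relSpec N₂ N₃ (Module.finrank ℂ V) ≤ relSpec N₁ N₃ j ∧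
    relSpec N₁ N₃ j ≤ relSpec N₁ N₂ j + relSpec N₂ N₃ 1 := by
  have hsplit := fun w (hw : w ≠ 0) => h1.log_div_add_log_div h2 h3 hw
  have lower : ∀ w, w ≠ 0 → relSpec N₂ N₃ (Module.finrank ℂ V) ≤ Real.log (N₃ w / N₂ w) :=
    fun w hw => minimax_finrank_le (h2.bddBelow_range_log_div h3) hw
  have upper : ∀ w, w ≠ 0 → Real.log (N₃ w / N₂ w) ≤ relSpec N₂ N₃ 1 :=
    fun w hw => le_minimax_one (h2.bddBelow_range_log_div h3) (h2.bddAbove_range_log_div h3)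
      (fun _ hc => h2.log_div_smul h3 hc) hw
  have left : relSpec N₁ N₂ j ≤ relSpec N₁ N₃ j + -relSpec N₂ N₃ (Module.finrank ℂ V) :=
    minimax_le_minimax_add (h1.bddBelow_range_log_div h2) (h1.bddBelow_range_log_div h3)
      (h1.bddAbove_range_log_div h3) hj1 hj2 fun w hw => by linarith [hsplit w hw, lower w hw]
  have right : relSpec N₁ N₃ j ≤ relSpec N₁ N₂ j + relSpec N₂ N₃ 1 :=
    minimax_le_minimax_add (h1.bddBelow_range_log_div h3) (h1.bddBelow_range_log_div h2)
      (h1.bddAbove_range_log_div h2) hj1 hj2 fun w hw => by linarith [hsplit w hw, upper w hw]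
  exact ⟨by linarith, right⟩
end
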